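/- arXiv:1804.11098 — 5 statements merged into one kernel-verified Lean document; each statement's English description precedes it below -/
import Mathlib

section
/- Let γ : ℝ → ℝ³ be a smooth arc-length parametrized curve with curvature κ at s₁. Set r(s) = γ(s₁+s) - γ(s₁) and r̂(s) = r(s)/|r(s)| for s ≠ 0. Then (r̂(s)·γ'(s₁)) (r̂(s)·γ'(s₁+s)) = 1 - (κ²/4) s² + O(s³) as s → 0. -/
open Filter Topology Asymptotics

open scoped RealInnerProductSpace

lemma bigO_step {E : Type*} [NormedAddCommGroup E] [NormedSpace ℝ E]
    {g g' : ℝ → E} (hg : ∀ t, HasDerivAt g (g' t) t) (h0 : g 0 = 0) {n : ℕ}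
    (hO : g' =O[𝓝 (0:ℝ)] fun h => h ^ n) :
    g =O[𝓝 (0:ℝ)] fun h => h ^ (n + 1) := by
  obtain ⟨c, hc⟩ := hO.bound
  rw [Metric.eventually_nhds_iff] at hc
  obtain ⟨δ, hδ, hb⟩ := hc
  rw [Asymptotics.isBigO_iff]
  refine ⟨|c|, Metric.eventually_nhds_iff.2 ⟨δ, hδ, fun {h} hhδ => ?_⟩⟩
  have key : ‖g h - g 0‖ ≤ (|c| * ‖h‖ ^ n) * ‖h - 0‖ := by
    apply Convex.norm_image_sub_le_of_norm_hasDerivWithin_le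
      (f' := g') (s := Metric.closedBall (0:ℝ) ‖h‖)
    · exact fun x _ => (hg x).hasDerivWithinAt
    · intro x hx
      simp only [Metric.mem_closedBall, Real.dist_eq, sub_zero] at hx
      have hxδ : dist x 0 < δ := by
        simp only [Real.dist_eq, sub_zero]
        calc |x| ≤ ‖h‖ := hx
        _ < δ := by simpa [Real.dist_eq] using hhδ
      calc ‖g' x‖ ≤ c * ‖x ^ n‖ := hb hxδ
        _ ≤ |c| * ‖x ^ n‖ := by
            exact mul_le_mul_of_nonneg_right (le_abs_self c) (norm_nonneg _)
        _ ≤ |c| * ‖h‖ ^ n := by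
            have : ‖x ^ n‖ ≤ ‖h‖ ^ n := by
              rw [norm_pow]
              exact pow_le_pow_left₀ (norm_nonneg x) hx n
            exact mul_le_mul_of_nonneg_left this (abs_nonneg c)
    · exact convex_closedBall _ _
    · simp
    · simp
  rw [h0, sub_zero, sub_zero] at key
  calc ‖g h‖ ≤ |c| * ‖h‖ ^ n * ‖h‖ := key
    _ = |c| * ‖h ^ (n+1)‖ := by rw [norm_pow]; ring

lemma taylor_isBigO {E : Type*} [NormedAddCommGroup E] [NormedSpace ℝ E]
    (n : ℕ) {f : ℝ → E} (hf : ContDiff ℝ (↑(⊤:ℕ∞)) f) (x₀ : ℝ) :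
    (fun h : ℝ => f (x₀ + h) - ∑ i ∈ Finset.range (n+1),
      (h ^ i / (Nat.factorial i)) • iteratedDeriv i f x₀) =O[𝓝 (0:ℝ)] fun h => h ^ (n+1) := by
  induction n generalizing f with
  | zero =>
      apply bigO_step (g' := fun t => deriv f (x₀ + t))
      · intro t
        have hD := (hf.differentiable (by simp) (x₀ + t)).hasDerivAt.comp_const_add x₀ t
        simpa [Finset.sum_range_one] using hD.sub_const (f x₀)
      · simp
      · have : Filter.Tendsto (fun t : ℝ => deriv f (x₀ + t)) (𝓝 0) (𝓝 (deriv f (x₀ + 0))) := by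
          exact ((hf.continuous_deriv (by simp)).comp (by continuity)).tendsto 0
        simpa using this.isBigO_one ℝ
  | succ n ih =>
      apply bigO_step (g' := fun t => deriv f (x₀ + t) - ∑ i ∈ Finset.range (n+1),
        (t ^ i / (Nat.factorial i)) • iteratedDeriv i (deriv f) x₀)
      · intro t
        apply HasDerivAt.sub
        · exact (hf.differentiable (by simp) (x₀ + t)).hasDerivAt.comp_const_add x₀ t
        · have hterm : ∀ i ∈ Finset.range (n+2), HasDerivAt
              (fun h : ℝ => (h ^ i / (Nat.factorial i)) • iteratedDeriv i f x₀)
              (((i : ℝ) * t ^ (i-1) / (Nat.factorial i)) • iteratedDeriv i f x₀) t := by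
            intro i _
            exact (((hasDerivAt_pow i t)).div_const (Nat.factorial i)).smul_const _
          have := HasDerivAt.sum hterm
          convert this using 1
          · ext h; simp [Finset.sum_apply]
          rw [Finset.sum_range_succ'
            (fun i => ((i:ℝ) * t ^ (i-1) / (Nat.factorial i)) • iteratedDeriv i f x₀) (n+1)]
          simp only [Nat.cast_zero, zero_mul, zero_div, zero_smul, add_zero]
          apply Finset.sum_congr rfl
          intro i _
          rw [← iteratedDeriv_succ']
          congr 1
          push_cast [Nat.factorial_succ]
          field_simp
      · simp [Finset.sum_range_succ']
      · exact ih ((contDiff_infty_iff_deriv.mp hf).2)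

lemma pow_isBigO_pow {m k : ℕ} (hmk : m ≤ k) :
    (fun h : ℝ => h ^ k) =O[𝓝 (0:ℝ)] fun h => h ^ m := by
  rcases eq_or_lt_of_le hmk with h | h
  · subst h; exact isBigO_refl _ _
  · exact (isLittleO_pow_pow h).isBigO

lemma const_mul_pow_isBigO (c : ℝ) {m k : ℕ} (hmk : m ≤ k) :
    (fun h : ℝ => c * h ^ k) =O[𝓝 (0:ℝ)] fun h => h ^ m :=
  ((isBigO_refl (fun h : ℝ => h ^ k) _).const_mul_left c).trans (pow_isBigO_pow hmk)

lemma const_mul_pow_smul_isBigO {E : Type*} [NormedAddCommGroup E] [NormedSpace ℝ E]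
    (c : ℝ) (v : E) {m k : ℕ} (hmk : m ≤ k) :
    (fun h : ℝ => (c * h ^ k) • v) =O[𝓝 (0:ℝ)] fun h => h ^ m := by
  have : (fun h : ℝ => (c * h ^ k) • v) =O[𝓝 (0:ℝ)] fun h => h ^ k := by
    apply IsBigO.of_bound (|c| * ‖v‖)
    filter_upwards with h
    apply le_of_eq
    rw [norm_smul, Real.norm_eq_abs, abs_mul, Real.norm_eq_abs]
    ring
  exact this.trans (pow_isBigO_pow hmk)

lemma inner_isBigO {E : Type*} [NormedAddCommGroup E] [InnerProductSpace ℝ E]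
    {l : Filter ℝ} {u v : ℝ → E} {f g : ℝ → ℝ} (hu : u =O[l] f) (hv : v =O[l] g) :
    (fun t => ⟪u t, v t⟫) =O[l] fun t => f t * g t := by
  have h1 : (fun t => ⟪u t, v t⟫) =O[l] fun t => ‖u t‖ * ‖v t‖ := by
    apply IsBigO.of_bound 1
    filter_upwards with t
    rw [one_mul]
    calc ‖⟪u t, v t⟫‖ ≤ ‖u t‖ * ‖v t‖ := by
          simpa using abs_real_inner_le_norm (u t) (v t)
      _ ≤ ‖‖u t‖ * ‖v t‖‖ := le_abs_self _
  exact h1.trans ((hu.norm_left).mul (hv.norm_left))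

/-- For a smooth arc-length parametrized curve `γ` in `ℝ³` with curvature `κ` at `s₁`,
with `r(s) = γ(s₁+s) - γ(s₁)` and `r̂ = r/|r|` (for `s ≠ 0`),
`(r̂·γ'(s₁))(r̂·γ'(s₁+s)) = 1 - (κ²/4)s² + O(s³)` as `s → 0`. -/
theorem stmt6 (γ : ℝ → EuclideanSpace ℝ (Fin 3)) (hγ : ContDiff ℝ (⊤ : ℕ∞) γ)
    (harc : ∀ s, ‖deriv γ s‖ = 1) (s₁ κ : ℝ)
    (hκ : κ = ‖iteratedDeriv 2 γ s₁‖) :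
    (fun s : ℝ =>
        ⟪‖γ (s₁ + s) - γ s₁‖⁻¹ • (γ (s₁ + s) - γ s₁), deriv γ s₁⟫ *
          ⟪‖γ (s₁ + s) - γ s₁‖⁻¹ • (γ (s₁ + s) - γ s₁), deriv γ (s₁ + s)⟫ -
        (1 - κ ^ 2 / 4 * s ^ 2))
      =O[𝓝[≠] 0] fun s : ℝ => s ^ 3 := by
  have hgS : ContDiff ℝ (↑(⊤:ℕ∞)) γ := hγ.of_le (by simp)
  have hdS : ContDiff ℝ (↑(⊤:ℕ∞)) (deriv γ) := (contDiff_infty_iff_deriv.mp hgS).2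
  have hd2S : ContDiff ℝ (↑(⊤:ℕ∞)) (iteratedDeriv 2 γ) := by
    rw [iteratedDeriv_succ', iteratedDeriv_one]
    exact (contDiff_infty_iff_deriv.mp hdS).2
  have hD2 : ∀ s, HasDerivAt (deriv γ) (iteratedDeriv 2 γ s) s := by
    intro s
    have := (hdS.differentiable (by simp) s).hasDerivAt
    rwa [show deriv (deriv γ) s = iteratedDeriv 2 γ s by
      rw [iteratedDeriv_succ', iteratedDeriv_one]] at this
  have hD3 : ∀ s, HasDerivAt (iteratedDeriv 2 γ) (iteratedDeriv 3 γ s) s := by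
    intro s
    have := (hd2S.differentiable (by simp) s).hasDerivAt
    have h32 : iteratedDeriv 3 γ = deriv (iteratedDeriv 2 γ) := iteratedDeriv_succ (n := 2)
    rwa [show deriv (iteratedDeriv 2 γ) s = iteratedDeriv 3 γ s from (congrFun h32 s).symm] at this
  have hunit : ∀ s, ⟪deriv γ s, deriv γ s⟫ = 1 := by
    intro s
    rw [real_inner_self_eq_norm_sq, harc s, one_pow]
  have horth : ∀ s, ⟪iteratedDeriv 2 γ s, deriv γ s⟫ = 0 := by
    intro s
    have h1 : HasDerivAt (fun t => ⟪deriv γ t, deriv γ t⟫)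
        (⟪deriv γ s, iteratedDeriv 2 γ s⟫ + ⟪iteratedDeriv 2 γ s, deriv γ s⟫) s :=
      (hD2 s).inner ℝ (hD2 s)
    have h2 : HasDerivAt (fun _ : ℝ => (1:ℝ)) 0 s := hasDerivAt_const _ _
    have heq : (fun t => ⟪deriv γ t, deriv γ t⟫) = fun _ : ℝ => (1:ℝ) := funext hunit
    rw [heq] at h1
    have := h1.unique h2
    rw [real_inner_comm] at this
    linarith
  set T := deriv γ s₁ with hTdef
  set A := iteratedDeriv 2 γ s₁ with hAdef
  set B := iteratedDeriv 3 γ s₁ with hBdef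
  have hTT : ⟪T, T⟫ = 1 := hunit s₁
  have hAT : ⟪A, T⟫ = 0 := horth s₁
  have hTA : ⟪T, A⟫ = 0 := by rw [real_inner_comm]; exact hAT
  have hAA : ⟪A, A⟫ = κ ^ 2 := by rw [real_inner_self_eq_norm_sq, hκ]
  have hBT : ⟪B, T⟫ = -κ ^ 2 := by
    have h1 : HasDerivAt (fun t => ⟪iteratedDeriv 2 γ t, deriv γ t⟫)
        (⟪A, A⟫ + ⟪B, T⟫) s₁ := (hD3 s₁).inner ℝ (hD2 s₁)
    have h2 : HasDerivAt (fun _ : ℝ => (0:ℝ)) 0 s₁ := hasDerivAt_const _ _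
    have heq : (fun t => ⟪iteratedDeriv 2 γ t, deriv γ t⟫) = fun _ : ℝ => (0:ℝ) := funext horth
    rw [heq] at h1
    have := h1.unique h2
    rw [hAA] at this
    linarith
  have hTB : ⟪T, B⟫ = -κ ^ 2 := by rw [real_inner_comm]; exact hBT
  have hBA : ⟪B, A⟫ = ⟪A, B⟫ := real_inner_comm _ _
  set E₃ : ℝ → EuclideanSpace ℝ (Fin 3) :=
    fun h => γ (s₁ + h) - γ s₁ - h • T - (h^2/2) • A - (h^3/6) • B with hE₃def
  set E₂ : ℝ → EuclideanSpace ℝ (Fin 3) :=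
    fun h => deriv γ (s₁ + h) - T - h • A - (h^2/2) • B with hE₂def
  have hE₃ : E₃ =O[𝓝 (0:ℝ)] fun h => h ^ 4 := by
    refine (taylor_isBigO 3 hgS s₁).congr_left fun h => ?_
    rw [hE₃def]
    simp [Finset.sum_range_succ, iteratedDeriv_one, Nat.factorial]
    module
  have hE₂ : E₂ =O[𝓝 (0:ℝ)] fun h => h ^ 3 := by
    refine (taylor_isBigO 2 hdS s₁).congr_left fun h => ?_
    rw [hE₂def]
    have e1 : iteratedDeriv 1 (deriv γ) s₁ = A := by
      rw [hAdef, iteratedDeriv_succ' (n := 1)]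
    have e2 : iteratedDeriv 2 (deriv γ) s₁ = B := by
      rw [hBdef, iteratedDeriv_succ' (n := 2)]
    simp [Finset.sum_range_succ, iteratedDeriv_one, Nat.factorial, e1, e2]
    module
  have hr : ∀ h : ℝ, γ (s₁ + h) - γ s₁ = h • T + (h^2/2) • A + (h^3/6) • B + E₃ h := by
    intro h; rw [hE₃def]; module
  have hd : ∀ h : ℝ, deriv γ (s₁ + h) = T + h • A + (h^2/2) • B + E₂ h := by
    intro h; rw [hE₂def]; module
  -- auxiliary big-O facts
  have hT1 : (fun _ : ℝ => T) =O[𝓝 (0:ℝ)] fun _ => (1:ℝ) :=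
    isBigO_const_const T one_ne_zero _
  have hP₃O : (fun h : ℝ => h • T + (h^2/2) • A + (h^3/6) • B) =O[𝓝 (0:ℝ)] fun h => h ^ 1 := by
    refine (((const_mul_pow_smul_isBigO (m := 1) (k := 1) 1 T (le_refl 1)).add
      (const_mul_pow_smul_isBigO (m := 1) (k := 2) (1/2) A (by norm_num))).add
      (const_mul_pow_smul_isBigO (m := 1) (k := 3) (1/6) B (by norm_num))).congr_left fun h => ?_
    module
  have hderivO : (fun h : ℝ => deriv γ (s₁ + h)) =O[𝓝 (0:ℝ)] fun _ => (1:ℝ) := by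
    apply IsBigO.of_bound 1
    filter_upwards with h
    simp [harc]
  have hrO : (fun h : ℝ => γ (s₁ + h) - γ s₁) =O[𝓝 (0:ℝ)] fun h => h ^ 1 := by
    refine IsBigO.congr_left ?_ (fun h => (hr h).symm)
    exact hP₃O.add (hE₃.trans (pow_isBigO_pow (by norm_num)))
  -- the three scalar expansions
  have keya : ∀ h : ℝ, ⟪γ (s₁ + h) - γ s₁, T⟫ - (h - κ^2/6 * h^3) = ⟪E₃ h, T⟫ := by
    intro h
    simp only [hr]
    simp only [inner_add_left, real_inner_smul_left, hTT, hAT, hBT]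
    ring
  have ha : (fun h : ℝ => ⟪γ (s₁ + h) - γ s₁, T⟫ - (h - κ^2/6 * h^3))
      =O[𝓝 (0:ℝ)] fun h => h ^ 4 :=
    (inner_isBigO hE₃ hT1).congr (fun h => (keya h).symm) (fun h => by ring)
  have keyb : ∀ h : ℝ, ⟪γ (s₁ + h) - γ s₁, deriv γ (s₁ + h)⟫ - (h - κ^2/6 * h^3)
      = (⟪A, B⟫ * (5/12)) * h^4 + (⟪B, B⟫ / 12) * h^5 + ⟪E₃ h, deriv γ (s₁ + h)⟫
        + ⟪h • T + (h^2/2) • A + (h^3/6) • B, E₂ h⟫ := by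
    intro h
    simp only [hr, hd]
    simp only [inner_add_left, inner_add_right, real_inner_smul_left, real_inner_smul_right,
      hTT, hAT, hTA, hBT, hTB, hAA, hBA]
    ring
  have hb : (fun h : ℝ => ⟪γ (s₁ + h) - γ s₁, deriv γ (s₁ + h)⟫ - (h - κ^2/6 * h^3))
      =O[𝓝 (0:ℝ)] fun h => h ^ 4 := by
    have pb1 := const_mul_pow_isBigO (⟪A, B⟫ * (5/12)) (le_refl 4)
    have pb2 := const_mul_pow_isBigO (⟪B, B⟫ / 12) (show 4 ≤ 5 by norm_num)
    have pb3 := (inner_isBigO hE₃ hderivO).congr_right (fun h => mul_one _)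
    have pb4 := (inner_isBigO hP₃O hE₂).congr_right (fun h : ℝ => show h^1*h^3 = h^4 by ring)
    exact (((pb1.add pb2).add pb3).add pb4).congr_left fun h => (keyb h).symm
  have keyn : ∀ h : ℝ, ⟪γ (s₁ + h) - γ s₁, γ (s₁ + h) - γ s₁⟫ - (h^2 - κ^2/12 * h^4)
      = (⟪A, B⟫ / 6) * h^5 + (⟪B, B⟫ / 36) * h^6
        + ⟪h • T + (h^2/2) • A + (h^3/6) • B, E₃ h⟫
        + ⟪E₃ h, h • T + (h^2/2) • A + (h^3/6) • B⟫ + ⟪E₃ h, E₃ h⟫ := by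
    intro h
    simp only [hr]
    simp only [inner_add_left, inner_add_right, real_inner_smul_left, real_inner_smul_right,
      hTT, hAT, hTA, hBT, hTB, hAA, hBA]
    ring
  have hnn : (fun h : ℝ => ⟪γ (s₁ + h) - γ s₁, γ (s₁ + h) - γ s₁⟫ - (h^2 - κ^2/12 * h^4))
      =O[𝓝 (0:ℝ)] fun h => h ^ 5 := by
    have pn1 := const_mul_pow_isBigO (⟪A, B⟫ / 6) (le_refl 5)
    have pn2 := const_mul_pow_isBigO (⟪B, B⟫ / 36) (show 5 ≤ 6 by norm_num)
    have pn3 := (inner_isBigO hP₃O hE₃).congr_right (fun h : ℝ => show h^1*h^4 = h^5 by ring)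
    have pn4 := (inner_isBigO hE₃ hP₃O).congr_right (fun h : ℝ => show h^4*h^1 = h^5 by ring)
    have pn5 := ((inner_isBigO hE₃ hE₃).congr_right
      (fun h : ℝ => show h^4*h^4 = h^8 by ring)).trans (pow_isBigO_pow (show 5 ≤ 8 by norm_num))
    exact ((((pn1.add pn2).add pn3).add pn4).add pn5).congr_left fun h => (keyn h).symm
  have hbO : (fun h : ℝ => ⟪γ (s₁ + h) - γ s₁, deriv γ (s₁ + h)⟫) =O[𝓝 (0:ℝ)] fun h => h ^ 1 :=
    (inner_isBigO hrO hderivO).congr_right (fun h => mul_one _)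
  have hp : (fun h : ℝ => h - κ^2/6 * h^3) =O[𝓝 (0:ℝ)] fun h => h ^ 1 := by
    refine ((const_mul_pow_isBigO (1:ℝ) (le_refl 1)).add
      (const_mul_pow_isBigO (-(κ^2/6)) (show 1 ≤ 3 by norm_num))).congr_left fun h => by ring
  have hq1 : (fun s : ℝ => 1 - κ^2/4 * s^2) =O[𝓝 (0:ℝ)] fun _ => (1:ℝ) := by
    have : Filter.Tendsto (fun s : ℝ => 1 - κ^2/4 * s^2) (𝓝 0) (𝓝 (1 - κ^2/4 * 0^2)) := by
      exact Continuous.tendsto (continuous_const.sub (continuous_const.mul (continuous_pow 2))) 0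
    exact this.isBigO_one ℝ
  -- the main numerator estimate
  have hF : (fun s : ℝ => ⟪γ (s₁ + s) - γ s₁, T⟫ * ⟪γ (s₁ + s) - γ s₁, deriv γ (s₁ + s)⟫
      - (1 - κ^2/4 * s^2) * ⟪γ (s₁ + s) - γ s₁, γ (s₁ + s) - γ s₁⟫)
      =O[𝓝 (0:ℝ)] fun s => s ^ 5 := by
    have t1 := (ha.mul hbO).congr_right (fun s : ℝ => show s^4*s^1 = s^5 by ring)
    have t2 := (hp.mul hb).congr_right (fun s : ℝ => show s^1*s^4 = s^5 by ring)
    have t3 := (hq1.mul hnn.neg_left).congr_right (fun s : ℝ => one_mul _)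
    have t4 := (const_mul_pow_isBigO (κ^4/144) (show 5 ≤ 6 by norm_num)).congr_left
      (fun s : ℝ => show κ^4/144 * s^6
        = (s - κ^2/6 * s^3)^2 - (1 - κ^2/4 * s^2) * (s^2 - κ^2/12 * s^4) by ring)
    exact (((t1.add t2).add t3).add t4).congr_left fun s => by ring
  -- lower bound on the squared norm
  obtain ⟨c, hc⟩ := hnn.bound
  have l1 : ∀ᶠ s in 𝓝 (0:ℝ), c * |s|^3 < 1/4 := by
    have : Filter.Tendsto (fun s : ℝ => c * |s|^3) (𝓝 0) (𝓝 (c * |(0:ℝ)|^3)) :=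
      Continuous.tendsto (continuous_const.mul (continuous_abs.pow 3)) 0
    simp only [abs_zero] at this
    exact this.eventually_lt_const (by norm_num)
  have l2 : ∀ᶠ s in 𝓝 (0:ℝ), κ^2/12 * s^2 < 1/4 := by
    have : Filter.Tendsto (fun s : ℝ => κ^2/12 * s^2) (𝓝 0) (𝓝 (κ^2/12 * 0^2)) :=
      Continuous.tendsto (continuous_const.mul (continuous_pow 2)) 0
    simp only [ne_eq, OfNat.ofNat_ne_zero, not_false_eq_true, zero_pow, mul_zero] at this
    exact this.eventually_lt_const (by norm_num)
  have hlow : ∀ᶠ s in 𝓝 (0:ℝ), s^2/2 ≤ ⟪γ (s₁ + s) - γ s₁, γ (s₁ + s) - γ s₁⟫ := by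
    filter_upwards [hc, l1, l2] with s h1 h2 h3
    have hn5 : ‖(s:ℝ)^5‖ = |s|^3 * s^2 := by
      rw [Real.norm_eq_abs, abs_pow]
      calc |s|^5 = |s|^3 * |s|^2 := by ring
        _ = |s|^3 * s^2 := by rw [sq_abs]
    rw [Real.norm_eq_abs, hn5] at h1
    have habs := abs_le.mp h1
    nlinarith [sq_nonneg s, abs_nonneg s, habs.1, habs.2, sq_nonneg (|s| * s)]
  have hne : ∀ᶠ s in 𝓝[≠] (0:ℝ), s ≠ 0 := eventually_mem_nhdsWithin
  have hlow' := hlow.filter_mono (nhdsWithin_le_nhds : 𝓝[≠] (0:ℝ) ≤ 𝓝 0)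
  have hinv : (fun s : ℝ => (⟪γ (s₁ + s) - γ s₁, γ (s₁ + s) - γ s₁⟫)⁻¹)
      =O[𝓝[≠] (0:ℝ)] fun s => (s^2)⁻¹ := by
    apply IsBigO.of_bound 2
    filter_upwards [hlow', hne] with s h1 h2
    have hs2 : (0:ℝ) < s^2 := by positivity
    have hn0 : (0:ℝ) < ⟪γ (s₁ + s) - γ s₁, γ (s₁ + s) - γ s₁⟫ := lt_of_lt_of_le (by positivity) h1
    rw [Real.norm_eq_abs, Real.norm_eq_abs, abs_of_pos (inv_pos.2 hn0),
      abs_of_pos (inv_pos.2 hs2)]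
    calc (⟪γ (s₁ + s) - γ s₁, γ (s₁ + s) - γ s₁⟫)⁻¹ ≤ (s^2/2)⁻¹ := by
          apply inv_anti₀ (by positivity) h1
      _ = 2 * (s^2)⁻¹ := by field_simp
  have hMul := (hF.mono nhdsWithin_le_nhds).mul hinv
  have aux : ∀ (a b N q : ℝ), N ≠ 0 → (a*b - q*N^2) * (N^2)⁻¹ = N⁻¹*a*(N⁻¹*b) - q := by
    intros a b N q hN
    field_simp
  refine hMul.congr' ?_ ?_
  · filter_upwards [hlow', hne] with s h1 h2
    have hn0 : (0:ℝ) < ⟪γ (s₁ + s) - γ s₁, γ (s₁ + s) - γ s₁⟫ := lt_of_lt_of_le (by positivity) h1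
    have hnorm : ‖γ (s₁ + s) - γ s₁‖^2 = ⟪γ (s₁ + s) - γ s₁, γ (s₁ + s) - γ s₁⟫ :=
      (real_inner_self_eq_norm_sq _).symm
    have h3 : ‖γ (s₁ + s) - γ s₁‖ ≠ 0 := by
      intro h
      rw [← hnorm, h] at hn0
      norm_num at hn0
    rw [real_inner_smul_left, real_inner_smul_left, ← hnorm]
    exact aux _ _ _ _ h3
  · filter_upwards [hne] with s h2
    rw [show (s:ℝ)^5 = s^3*s^2 by ring, mul_assoc, mul_inv_cancel₀ (pow_ne_zero 2 h2), mul_one]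
end

section
/- Let Γ₁ and Γ₂ be disjoint smooth closed curves in ℝ³ and α a real number. On Γ₁ × Γ₂, with r₁₂ = x₂ - x₁ and r̂₁₂ = r₁₂/|r₁₂|, the following identity of 2-forms holds: (dx₁ · dx₂)/|x₁ - x₂|^α = α (r̂₁₂ · dx₁)(r̂₁₂ · dx₂)/|x₁ - x₂|^α − d(ω₁/|x₁ - x₂|^{α−1}), where ω₁ is the 1-form dx₁ · r̂₁₂. -/
open Filter Topology

open scoped RealInnerProductSpace

/-- Pointwise form (in arc-length coordinates) of the 2-form identity
`(dx₁·dx₂)/|x₁-x₂|^α = α (r̂₁₂·dx₁)(r̂₁₂·dx₂)/|x₁-x₂|^α - d(ω₁/|x₁-x₂|^{α-1})`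
on `Γ₁ × Γ₂`, where `ω₁ = (γ₁'(s₁)·r̂₁₂) ds₁`; the exterior derivative term becomes
`+ ∂/∂s₂ [(γ₁'(s₁)·r̂₁₂)/|x₁-x₂|^{α-1}]` in coefficients of `ds₁ ∧ ds₂`. -/
theorem stmt10 (γ₁ γ₂ : ℝ → EuclideanSpace ℝ (Fin 3))
    (hγ₁ : ContDiff ℝ (⊤ : ℕ∞) γ₁) (hγ₂ : ContDiff ℝ (⊤ : ℕ∞) γ₂)
    (harc₁ : ∀ s, ‖deriv γ₁ s‖ = 1) (harc₂ : ∀ s, ‖deriv γ₂ s‖ = 1)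
    (L₁ L₂ : ℝ) (hL₁ : 0 < L₁) (hL₂ : 0 < L₂)
    (hper₁ : ∀ s, γ₁ (s + L₁) = γ₁ s) (hper₂ : ∀ s, γ₂ (s + L₂) = γ₂ s)
    (hdisj : ∀ s u : ℝ, γ₁ s ≠ γ₂ u)
    (α : ℝ) (s₁ s₂ : ℝ) :
    ⟪deriv γ₁ s₁, deriv γ₂ s₂⟫ / ‖γ₂ s₂ - γ₁ s₁‖ ^ α =
      α * (⟪‖γ₂ s₂ - γ₁ s₁‖⁻¹ • (γ₂ s₂ - γ₁ s₁), deriv γ₁ s₁⟫ *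
            ⟪‖γ₂ s₂ - γ₁ s₁‖⁻¹ • (γ₂ s₂ - γ₁ s₁), deriv γ₂ s₂⟫) / ‖γ₂ s₂ - γ₁ s₁‖ ^ α +
      deriv (fun v : ℝ =>
        ⟪deriv γ₁ s₁, ‖γ₂ v - γ₁ s₁‖⁻¹ • (γ₂ v - γ₁ s₁)⟫ / ‖γ₂ v - γ₁ s₁‖ ^ (α - 1)) s₂ := by
  have hr0 : ∀ v, γ₂ v - γ₁ s₁ ≠ 0 := fun v => sub_ne_zero.mpr (hdisj s₁ v).symm
  have hnorm : ∀ v, (0:ℝ) < ‖γ₂ v - γ₁ s₁‖ := fun v => norm_pos_iff.mpr (hr0 v)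
  -- rewrite the function under deriv
  have hfun : (fun v : ℝ =>
        ⟪deriv γ₁ s₁, ‖γ₂ v - γ₁ s₁‖⁻¹ • (γ₂ v - γ₁ s₁)⟫ / ‖γ₂ v - γ₁ s₁‖ ^ (α - 1)) =
      (fun v : ℝ =>
        ⟪deriv γ₁ s₁, γ₂ v - γ₁ s₁⟫ * (⟪γ₂ v - γ₁ s₁, γ₂ v - γ₁ s₁⟫ : ℝ) ^ (-α/2)) := by
    funext v
    have h := hnorm v
    rw [real_inner_smul_right, real_inner_self_eq_norm_sq, ← Real.rpow_natCast ‖γ₂ v - γ₁ s₁‖ 2,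
      ← Real.rpow_mul h.le, Real.rpow_sub h, Real.rpow_one]
    have h2 : ((2:ℕ):ℝ) * (-α/2) = -α := by push_cast; ring
    rw [h2, Real.rpow_neg h.le]
    have hα : ‖γ₂ v - γ₁ s₁‖ ^ α ≠ 0 := (Real.rpow_pos_of_pos h α).ne'
    field_simp
  rw [hfun]
  -- compute the derivative
  have hD2 : HasDerivAt γ₂ (deriv γ₂ s₂) s₂ :=
    ((hγ₂.differentiable (by simp)) s₂).hasDerivAt
  have hrd : HasDerivAt (fun v => γ₂ v - γ₁ s₁) (deriv γ₂ s₂) s₂ := hD2.sub_const _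
  have hg : HasDerivAt (fun v => (⟪deriv γ₁ s₁, γ₂ v - γ₁ s₁⟫ : ℝ))
      ⟪deriv γ₁ s₁, deriv γ₂ s₂⟫ s₂ := by
    have := (hasDerivAt_const s₂ (deriv γ₁ s₁)).inner ℝ hrd
    simpa using this
  have hq : HasDerivAt (fun v => (⟪γ₂ v - γ₁ s₁, γ₂ v - γ₁ s₁⟫ : ℝ))
      (2 * ⟪γ₂ s₂ - γ₁ s₁, deriv γ₂ s₂⟫) s₂ := by
    have := hrd.inner ℝ hrd
    have hc : (⟪deriv γ₂ s₂, γ₂ s₂ - γ₁ s₁⟫ : ℝ) = ⟪γ₂ s₂ - γ₁ s₁, deriv γ₂ s₂⟫ :=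
      real_inner_comm _ _
    rw [hc] at this
    convert this using 1 <;> try rfl
    ring
  have hq0 : (0:ℝ) < ⟪γ₂ s₂ - γ₁ s₁, γ₂ s₂ - γ₁ s₁⟫ := by
    rw [real_inner_self_eq_norm_sq]; exact pow_pos (hnorm s₂) 2
  have hpow : HasDerivAt (fun v => (⟪γ₂ v - γ₁ s₁, γ₂ v - γ₁ s₁⟫ : ℝ) ^ (-α/2))
      ((-α/2) * (⟪γ₂ s₂ - γ₁ s₁, γ₂ s₂ - γ₁ s₁⟫ : ℝ) ^ (-α/2 - 1) *
        (2 * ⟪γ₂ s₂ - γ₁ s₁, deriv γ₂ s₂⟫)) s₂ := by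
    exact (Real.hasDerivAt_rpow_const (Or.inl hq0.ne')).comp s₂ hq
  have hprod := hg.mul hpow
  erw [hprod.deriv]
  -- final algebra
  have h := hnorm s₂
  have hsq : (⟪γ₂ s₂ - γ₁ s₁, γ₂ s₂ - γ₁ s₁⟫ : ℝ) = ‖γ₂ s₂ - γ₁ s₁‖ ^ (2:ℕ) :=
    real_inner_self_eq_norm_sq _
  rw [real_inner_smul_left, real_inner_smul_left, hsq,
    ← Real.rpow_natCast ‖γ₂ s₂ - γ₁ s₁‖ 2, ← Real.rpow_mul h.le, ← Real.rpow_mul h.le]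
  have e1 : ((2:ℕ):ℝ) * (-α/2) = -α := by push_cast; ring
  have e2 : ((2:ℕ):ℝ) * (-α/2 - 1) = -α - 2 := by push_cast; ring
  rw [e1, e2, Real.rpow_neg h.le, Real.rpow_sub h, Real.rpow_neg h.le]
  have hα : ‖γ₂ s₂ - γ₁ s₁‖ ^ α ≠ 0 := (Real.rpow_pos_of_pos h α).ne'
  have hgc : (⟪γ₂ s₂ - γ₁ s₁, deriv γ₁ s₁⟫ : ℝ) = ⟪deriv γ₁ s₁, γ₂ s₂ - γ₁ s₁⟫ :=
    real_inner_comm _ _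
  rw [hgc]
  have h2' : ‖γ₂ s₂ - γ₁ s₁‖ ^ (2:ℝ) = ‖γ₂ s₂ - γ₁ s₁‖ * ‖γ₂ s₂ - γ₁ s₁‖ := by
    rw [show (2:ℝ) = ((2:ℕ):ℝ) by norm_num, Real.rpow_natCast]; ring
  rw [h2']
  field_simp
  ring
end

section
/- Let Γ₁, Γ₂ be disjoint smooth closed curves in ℝ³. Then ∫∫ (dx₁·dx₂)/|x₁−x₂| = ∫∫ (r̂₁₂·dx₁)(r̂₁₂·dx₂)/|x₁−x₂|, i.e., Neumann's and Weber's double integrals for the mutual inductance agree. -/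
open MeasureTheory Filter Topology

open scoped RealInnerProductSpace

/-- Equivalence of Neumann's and Weber's double integrals for the mutual inductance of
two disjoint smooth closed curves (in arc-length parametrization). -/
theorem stmt11 (γ₁ γ₂ : ℝ → EuclideanSpace ℝ (Fin 3))
    (hγ₁ : ContDiff ℝ (⊤ : ℕ∞) γ₁) (hγ₂ : ContDiff ℝ (⊤ : ℕ∞) γ₂)
    (harc₁ : ∀ s, ‖deriv γ₁ s‖ = 1) (harc₂ : ∀ s, ‖deriv γ₂ s‖ = 1)
    (L₁ L₂ : ℝ) (hL₁ : 0 < L₁) (hL₂ : 0 < L₂)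
    (hper₁ : ∀ s, γ₁ (s + L₁) = γ₁ s) (hper₂ : ∀ s, γ₂ (s + L₂) = γ₂ s)
    (hdisj : ∀ s u : ℝ, γ₁ s ≠ γ₂ u) :
    (∫ s₁ in (0:ℝ)..L₁, ∫ s₂ in (0:ℝ)..L₂,
        ⟪deriv γ₁ s₁, deriv γ₂ s₂⟫ / ‖γ₁ s₁ - γ₂ s₂‖) =
    ∫ s₁ in (0:ℝ)..L₁, ∫ s₂ in (0:ℝ)..L₂,
        (⟪‖γ₂ s₂ - γ₁ s₁‖⁻¹ • (γ₂ s₂ - γ₁ s₁), deriv γ₁ s₁⟫ *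
          ⟪‖γ₂ s₂ - γ₁ s₁‖⁻¹ • (γ₂ s₂ - γ₁ s₁), deriv γ₂ s₂⟫) / ‖γ₁ s₁ - γ₂ s₂‖ := by
  have hd2 : Differentiable ℝ γ₂ := hγ₂.differentiable (by simp)
  have hc2' : Continuous (deriv γ₂) := hγ₂.continuous_deriv (by simp)
  apply intervalIntegral.integral_congr
  intro s₁ _
  simp only
  set c := γ₁ s₁ with hc
  set w := deriv γ₁ s₁ with hw
  -- nonvanishing
  have hne : ∀ t, γ₂ t - c ≠ 0 := fun t => sub_ne_zero.mpr (hdisj s₁ t).symm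
  have hrne : ∀ t, ‖γ₂ t - c‖ ≠ 0 := fun t => norm_ne_zero_iff.mpr (hne t)
  have hrne' : ∀ t, ‖c - γ₂ t‖ ≠ 0 := fun t =>
    norm_ne_zero_iff.mpr (sub_ne_zero.mpr (hdisj s₁ t))
  set N : ℝ → ℝ := fun t => ⟪w, deriv γ₂ t⟫ / ‖c - γ₂ t‖ with hN
  set W : ℝ → ℝ := fun t =>
    (⟪‖γ₂ t - c‖⁻¹ • (γ₂ t - c), w⟫ * ⟪‖γ₂ t - c‖⁻¹ • (γ₂ t - c), deriv γ₂ t⟫) /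
      ‖c - γ₂ t‖ with hW
  set g : ℝ → ℝ := fun t => -⟪γ₂ t - c, w⟫ / ‖γ₂ t - c‖ with hg
  have hderiv : ∀ t : ℝ, HasDerivAt g (W t - N t) t := by
    intro t
    have hv : HasDerivAt (fun u => γ₂ u - c) (deriv γ₂ t) t :=
      (hd2 t).hasDerivAt.sub_const c
    have hA : HasDerivAt (fun u => ⟪γ₂ u - c, w⟫) ⟪deriv γ₂ t, w⟫ t := by
      simpa using hv.inner ℝ (hasDerivAt_const t w)
    have hB : HasDerivAt (fun u => ⟪γ₂ u - c, γ₂ u - c⟫)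
        (2 * ⟪γ₂ t - c, deriv γ₂ t⟫) t := by
      have h := hv.inner ℝ hv
      refine h.congr_deriv ?_
      rw [real_inner_comm]
      ring
    have hBne : (⟪γ₂ t - c, γ₂ t - c⟫ : ℝ) ≠ 0 := by
      rw [real_inner_self_eq_norm_sq]
      exact pow_ne_zero 2 (hrne t)
    have hrt : HasDerivAt (fun u => ‖γ₂ u - c‖)
        (⟪γ₂ t - c, deriv γ₂ t⟫ / ‖γ₂ t - c‖) t := by
      have h := hB.sqrt hBne
      have h2 : ∀ u, Real.sqrt (⟪γ₂ u - c, γ₂ u - c⟫ : ℝ) = ‖γ₂ u - c‖ := fun u =>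
        (norm_eq_sqrt_real_inner (γ₂ u - c)).symm
      simp only [h2] at h
      convert h using 1
      field_simp
    have hdg : HasDerivAt g
        ((-⟪deriv γ₂ t, w⟫ * ‖γ₂ t - c‖ -
          (-⟪γ₂ t - c, w⟫) * (⟪γ₂ t - c, deriv γ₂ t⟫ / ‖γ₂ t - c‖)) / ‖γ₂ t - c‖ ^ 2) t :=
      hA.neg.div hrt (hrne t)
    convert hdg using 1
    have hns : ‖c - γ₂ t‖ = ‖γ₂ t - c‖ := norm_sub_rev _ _
    simp only [hW, hN, hns, real_inner_smul_left]
    rw [real_inner_comm w (deriv γ₂ t)]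
    set a : ℝ := ⟪γ₂ t - c, w⟫
    set b : ℝ := ⟪γ₂ t - c, deriv γ₂ t⟫
    set d : ℝ := ⟪deriv γ₂ t, w⟫
    set r : ℝ := ‖γ₂ t - c‖ with hr
    have hr0 : r ≠ 0 := hrne t
    field_simp
    ring
  have hcont_sub : Continuous fun t => γ₂ t - c := hd2.continuous.sub continuous_const
  have hcontW : Continuous W := by
    apply Continuous.div
    · exact ((hcont_sub.norm.inv₀ hrne).smul hcont_sub).inner continuous_const |>.mul
        (((hcont_sub.norm.inv₀ hrne).smul hcont_sub).inner hc2')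
    · exact (continuous_const.sub hd2.continuous).norm
    · exact hrne'
  have hcontN : Continuous N := by
    apply Continuous.div
    · exact continuous_const.inner hc2'
    · exact (continuous_const.sub hd2.continuous).norm
    · exact hrne'
  have hIW : IntervalIntegrable W volume 0 L₂ := hcontW.intervalIntegrable 0 L₂
  have hIN : IntervalIntegrable N volume 0 L₂ := hcontN.intervalIntegrable 0 L₂
  have key : (∫ t in (0:ℝ)..L₂, (W t - N t)) = g L₂ - g 0 :=
    intervalIntegral.integral_eq_sub_of_hasDerivAt (fun t _ => hderiv t)
      ((hcontW.sub hcontN).intervalIntegrable 0 L₂)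
  have hgper : g L₂ = g 0 := by
    have : γ₂ L₂ = γ₂ 0 := by simpa using hper₂ 0
    simp [hg, this]
  rw [intervalIntegral.integral_sub hIW hIN, hgper, sub_self] at key
  have : (∫ t in (0:ℝ)..L₂, N t) = ∫ t in (0:ℝ)..L₂, W t := by linarith
  exact this
end

section
/- Let Γ be a smooth simple closed curve of length L in ℝ³ and let Δ_ε = {(x₁,x₂) : |x₁−x₂| ≤ ε}. Then the limit as ε → 0⁺ of ( (μ₀/4π) ∬_{(Γ×Γ)∖Δ_ε} (dx₁·dx₂)/|x₁−x₂| + (μ₀ L/2π) log ε ) exists (Hadamard regularization of Neumann's self-inductance integral). -/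
open MeasureTheory Filter Topology Real

open scoped RealInnerProductSpace

namespace Stmt12Aux

variable {E : Type*} [NormedAddCommGroup E] [NormedSpace ℝ E] [CompleteSpace E]

lemma periodic_deriv' {L : ℝ} {f : ℝ → E} (hp : ∀ x, f (x + L) = f x) :
    ∀ x, deriv f (x + L) = deriv f x := by
  intro x
  have h1 : (fun y => f (y + L)) = f := funext hp
  calc deriv f (x + L) = deriv (fun y => f (y + L)) x := (deriv_comp_add_const f L x).symm
    _ = deriv f x := by rw [h1]

lemma bounded_of_periodic {L : ℝ} (hL : 0 < L) {f : ℝ → E} (hf : Continuous f)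
    (hp : ∀ x, f (x + L) = f x) : ∃ M : ℝ, ∀ s, ‖f s‖ ≤ M := by
  obtain ⟨M, hM⟩ := (isCompact_Icc (a := (0:ℝ)) (b := L)).exists_bound_of_continuousOn
    hf.continuousOn
  refine ⟨M, fun s => ?_⟩
  have hp' : Function.Periodic f L := hp
  have h1 : toIcoMod hL 0 s ∈ Set.Ico 0 L := toIcoMod_mem_Ico' hL s
  have h2 : f (toIcoMod hL 0 s) = f s := by
    have h3 := hp'.sub_zsmul_eq (x := s) (toIcoDiv hL 0 s)
    rw [← h3]
    rfl
  rw [← h2]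
  exact hM _ ⟨h1.1, h1.2.le⟩

lemma norm_sub_le_mul {f : ℝ → E} (hf : Differentiable ℝ f) (hc : Continuous (deriv f))
    {M : ℝ} (hM : ∀ s, ‖deriv f s‖ ≤ M) (a b : ℝ) : ‖f b - f a‖ ≤ M * |b - a| := by
  have h := intervalIntegral.integral_deriv_eq_sub (a := a) (b := b) (f := f)
    (fun x _ => hf x) (hc.intervalIntegrable a b)
  rw [← h]
  exact intervalIntegral.norm_integral_le_of_norm_le_const fun x _ => hM x

lemma chord_lower {f : ℝ → E} (hf : Differentiable ℝ f) (hc : Continuous (deriv f))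
    (hunit : ∀ s, ‖deriv f s‖ = 1) {M : ℝ} (hM0 : 0 ≤ M)
    (hlip : ∀ a b, ‖deriv f b - deriv f a‖ ≤ M * |b - a|) (s u : ℝ) :
    |u| - M * u ^ 2 ≤ ‖f (s + u) - f s‖ := by
  have h := intervalIntegral.integral_deriv_eq_sub (a := s) (b := s + u) (f := f)
    (fun x _ => hf x) (hc.intervalIntegrable _ _)
  have h2 : (∫ t in s..(s+u), (deriv f t - deriv f s)) = f (s+u) - f s - u • deriv f s := by
    rw [intervalIntegral.integral_sub (hc.intervalIntegrable _ _) intervalIntegrable_const,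
      h, intervalIntegral.integral_const]
    congr 2
    ring_nf
  have h3 : ‖f (s+u) - f s - u • deriv f s‖ ≤ M * |u| * |u| := by
    rw [← h2]
    have := intervalIntegral.norm_integral_le_of_norm_le_const
      (C := M * |u|) (a := s) (b := s + u) (f := fun t => deriv f t - deriv f s) ?_
    · calc ‖_‖ ≤ M * |u| * |s + u - s| := this
        _ = M * |u| * |u| := by ring_nf
    · intro x hx
      have hx' : |x - s| ≤ |u| := by
        rcases Set.mem_uIoc.mp hx with ⟨h1, h2'⟩ | ⟨h1, h2'⟩ <;>
          rw [abs_le] <;> constructor <;> nlinarith [le_abs_self u, neg_abs_le u]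
      calc ‖deriv f x - deriv f s‖ ≤ M * |x - s| := hlip s x
        _ ≤ M * |u| := by nlinarith
  have h4 : ‖u • deriv f s‖ = |u| := by
    rw [norm_smul, hunit, Real.norm_eq_abs, mul_one]
  have h5 := norm_sub_norm_le (u • deriv f s) (u • deriv f s - (f (s+u) - f s))
  have h6 : ‖u • deriv f s - (f (s+u) - f s)‖ = ‖f (s+u) - f s - u • deriv f s‖ := by
    rw [norm_sub_rev]
  have h7 : u • deriv f s - (u • deriv f s - (f (s+u) - f s)) = f (s + u) - f s := by abel
  rw [h7, h6, h4] at h5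
  have h8 : M * |u| * |u| = M * u ^ 2 := by
    rw [mul_assoc, abs_mul_abs_self, sq]
  nlinarith

lemma chord_global {L : ℝ} (hL : 0 < L) {γ : ℝ → EuclideanSpace ℝ (Fin 3)}
    (hγc : Continuous γ) (hper : ∀ x, γ (x + L) = γ x)
    (hsimple : Set.InjOn γ (Set.Ico 0 L)) {M : ℝ} (hM1 : 1 ≤ M)
    (hlow : ∀ s u, |u| - M * u ^ 2 ≤ ‖γ (s + u) - γ s‖) :
    ∃ c₀ : ℝ, 0 < c₀ ∧ c₀ ≤ 1 ∧ ∀ s u, |u| ≤ L / 2 → c₀ * |u| ≤ ‖γ (s + u) - γ s‖ := by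
  have hγper : Function.Periodic γ L := hper
  have hM0 : 0 < M := lt_of_lt_of_le one_pos hM1
  set δ : ℝ := min (1/(2*M)) (L/2) with hδdef
  have hδpos : 0 < δ := lt_min (by positivity) (by positivity)
  have hδle : δ ≤ L/2 := min_le_right _ _
  set K : Set (ℝ × ℝ) := Set.Icc 0 L ×ˢ (Set.Icc (-(L/2)) (-δ) ∪ Set.Icc δ (L/2)) with hKdef
  have hKc : IsCompact K := isCompact_Icc.prod (isCompact_Icc.union isCompact_Icc)
  have hKne : K.Nonempty := ⟨(0, δ), ⟨Set.mem_Icc.mpr ⟨le_refl 0, hL.le⟩,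
    Or.inr (Set.mem_Icc.mpr ⟨le_refl δ, hδle⟩)⟩⟩
  have hcont : Continuous (fun p : ℝ × ℝ => ‖γ (p.1 + p.2) - γ p.1‖) :=
    ((hγc.comp (continuous_fst.add continuous_snd)).sub (hγc.comp continuous_fst)).norm
  obtain ⟨p₀, hp₀K, hmin⟩ := hKc.exists_isMinOn hKne hcont.continuousOn
  have hKpos : ∀ p ∈ K, γ (p.1 + p.2) ≠ γ p.1 := by
    rintro p hp heq
    obtain ⟨hp1, hp2⟩ := hp
    have hδabs : δ ≤ |p.2| ∧ |p.2| ≤ L/2 := by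
      rcases hp2 with h | h
      · rw [abs_of_nonpos (le_trans h.2 (by linarith))]
        constructor <;> [linarith [h.2]; linarith [h.1]]
      · rw [abs_of_nonneg (le_trans hδpos.le h.1)]
        exact ⟨h.1, h.2⟩
    set a := toIcoMod hL 0 p.1 with hadef
    set b := toIcoMod hL 0 (p.1 + p.2) with hbdef
    have ha : γ a = γ p.1 := by
      have h3 := hγper.sub_zsmul_eq (x := p.1) (toIcoDiv hL 0 p.1)
      rw [← h3]; rfl
    have hb : γ b = γ (p.1 + p.2) := by
      have h3 := hγper.sub_zsmul_eq (x := p.1 + p.2) (toIcoDiv hL 0 (p.1 + p.2))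
      rw [← h3]; rfl
    have haI : a ∈ Set.Ico 0 L := toIcoMod_mem_Ico' hL _
    have hbI : b ∈ Set.Ico 0 L := toIcoMod_mem_Ico' hL _
    have hab : b = a := hsimple hbI haI (by rw [ha, hb, heq])
    obtain ⟨n, hn⟩ := (toIcoMod_eq_toIcoMod hL).mp hab
    have hn' : p.1 - (p.1 + p.2) = (n:ℝ) * L := by rw [hn, zsmul_eq_mul]
    have hp2eq : p.2 = (-n : ℝ) * L := by push_cast; linarith
    rcases eq_or_ne n 0 with hn0 | hn0
    · rw [hn0] at hp2eq
      simp at hp2eq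
      rw [hp2eq] at hδabs
      simp at hδabs
      linarith [hδabs.1, hδpos]
    · have h1 : (1:ℝ) ≤ |(-n : ℝ)| := by
        rw [abs_neg]
        exact_mod_cast Int.one_le_abs hn0
      have h2 : |p.2| = |(-n:ℝ)| * L := by rw [hp2eq, abs_mul, abs_of_pos hL]
      nlinarith [hδabs.2]
  set m : ℝ := ‖γ (p₀.1 + p₀.2) - γ p₀.1‖ with hmdef
  have hmpos : 0 < m := by
    rw [hmdef, norm_pos_iff, sub_ne_zero]
    exact fun h => hKpos p₀ hp₀K h
  refine ⟨min (1/2) (m / L), lt_min (by norm_num) (by positivity),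
    le_trans (min_le_left _ _) (by norm_num), ?_⟩
  intro s u hu
  rcases le_or_gt |u| δ with hsmall | hlarge
  · have h1 : M * u ^ 2 ≤ |u| / 2 := by
      have h2 : M * |u| ≤ 1/2 := by
        have : |u| ≤ 1/(2*M) := le_trans hsmall (min_le_left _ _)
        calc M * |u| ≤ M * (1/(2*M)) := by nlinarith
          _ = 1/2 := by field_simp
      have : M * u ^ 2 = (M * |u|) * |u| := by rw [← sq_abs u]; ring
      nlinarith [abs_nonneg u]
    have h3 := hlow s u
    have h4 : min (1/2) (m/L) * |u| ≤ |u| / 2 := by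
      have := min_le_left (1/2 : ℝ) (m/L)
      nlinarith [abs_nonneg u]
    linarith
  · set s' := toIcoMod hL 0 s with hs'def
    have hs1 : γ s' = γ s := by
      have h3 := hγper.sub_zsmul_eq (x := s) (toIcoDiv hL 0 s)
      rw [← h3]; rfl
    have hs2 : γ (s' + u) = γ (s + u) := by
      have h4 : s' + u = s + u - toIcoDiv hL 0 s • L := by
        have h5 : s' = s - toIcoDiv hL 0 s • L := rfl
        rw [h5]; ring
      rw [h4]
      exact hγper.sub_zsmul_eq _
    have hs'I : s' ∈ Set.Ico 0 L := toIcoMod_mem_Ico' hL _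
    have hpK : ((s', u) : ℝ × ℝ) ∈ K := by
      refine ⟨Set.mem_Icc.mpr ⟨hs'I.1, hs'I.2.le⟩, ?_⟩
      rcases le_or_gt 0 u with h0 | h0
      · right
        rw [abs_of_nonneg h0] at hlarge hu
        exact Set.mem_Icc.mpr ⟨hlarge.le, hu⟩
      · left
        rw [abs_of_neg h0] at hlarge hu
        exact Set.mem_Icc.mpr ⟨by linarith, by linarith⟩
    have h5 : m ≤ ‖γ (s' + u) - γ s'‖ := isMinOn_iff.mp hmin (s', u) hpK
    rw [hs1, hs2] at h5
    have h6 : min (1/2) (m/L) * |u| ≤ m := by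
      have h7 : min (1/2) (m/L) * |u| ≤ (m/L) * (L/2) := by
        have := min_le_right (1/2 : ℝ) (m/L)
        have hmLnn : 0 < m / L := by positivity
        nlinarith [abs_nonneg u]
      calc min (1/2) (m/L) * |u| ≤ (m/L) * (L/2) := h7
        _ ≤ m := by rw [div_mul_eq_mul_div, mul_div_assoc]; nlinarith [div_le_one_of_le₀ (by linarith : L/2 ≤ L) hL.le]
    linarith

lemma integral_one_div_abs {L ε : ℝ} (hL : 0 < L) (hε : 0 < ε) (hεL : ε < L / 2) :
    ∫ u in Set.Ioc (-(L/2)) (L/2) ∩ {u : ℝ | ε < |u|}, 1 / |u| =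
      2 * (Real.log (L/2) - Real.log ε) := by
  have hset : Set.Ioc (-(L/2)) (L/2) ∩ {u : ℝ | ε < |u|} =
      Set.Ioo (-(L/2)) (-ε) ∪ Set.Ioc ε (L/2) := by
    ext u
    simp only [Set.mem_inter_iff, Set.mem_Ioc, Set.mem_setOf_eq, Set.mem_union, Set.mem_Ioo,
      lt_abs]
    constructor
    · rintro ⟨⟨h1, h2⟩, h3 | h3⟩
      · exact Or.inr ⟨h3, h2⟩
      · exact Or.inl ⟨h1, by linarith⟩
    · rintro (⟨h1, h2⟩ | ⟨h1, h2⟩)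
      · exact ⟨⟨h1, by linarith⟩, Or.inr (by linarith)⟩
      · exact ⟨⟨by linarith, h2⟩, Or.inl h1⟩
  rw [hset]
  have hmeas : Measurable (fun u : ℝ => 1 / |u|) :=
    measurable_const.div continuous_abs.measurable
  have hint1 : IntegrableOn (fun u : ℝ => 1 / |u|) (Set.Ioo (-(L/2)) (-ε)) volume := by
    apply Measure.integrableOn_of_bounded (M := 1/ε)
    · rw [Real.volume_Ioo]; exact ENNReal.ofReal_ne_top
    · exact hmeas.aestronglyMeasurable
    · rw [ae_restrict_iff' measurableSet_Ioo]
      filter_upwards with x hx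
      rw [Real.norm_eq_abs, abs_of_nonneg (by positivity)]
      have : ε ≤ |x| := by rw [abs_of_neg (by linarith [hx.2] : x < 0)]; linarith [hx.2]
      exact one_div_le_one_div_of_le hε this
  have hint2 : IntegrableOn (fun u : ℝ => 1 / |u|) (Set.Ioc ε (L/2)) volume := by
    apply Measure.integrableOn_of_bounded (M := 1/ε)
    · rw [Real.volume_Ioc]; exact ENNReal.ofReal_ne_top
    · exact hmeas.aestronglyMeasurable
    · rw [ae_restrict_iff' measurableSet_Ioc]
      filter_upwards with x hx
      rw [Real.norm_eq_abs, abs_of_nonneg (by positivity)]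
      have : ε ≤ |x| := by rw [abs_of_pos (by linarith [hx.1] : 0 < x)]; linarith [hx.1]
      exact one_div_le_one_div_of_le hε this
  have hdisj : Disjoint (Set.Ioo (-(L/2)) (-ε)) (Set.Ioc ε (L/2)) := by
    rw [Set.disjoint_left]
    rintro x ⟨_, h2⟩ ⟨h3, _⟩
    linarith
  rw [setIntegral_union hdisj measurableSet_Ioc hint1 hint2]
  have hpart2 : ∫ u in Set.Ioc ε (L/2), 1 / |u| = Real.log (L/2) - Real.log ε := by
    have hcongr : ∫ u in Set.Ioc ε (L/2), 1 / |u| = ∫ u in Set.Ioc ε (L/2), 1 / u := by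
      apply setIntegral_congr_fun measurableSet_Ioc
      intro x hx
      simp only [abs_of_pos (lt_trans hε hx.1)]
    rw [hcongr, ← intervalIntegral.integral_of_le (by linarith), integral_one_div
      (by simp only [Set.uIcc_of_le (by linarith : ε ≤ L/2), Set.mem_Icc]; push_neg; intro h; linarith),
      Real.log_div (by positivity) (by positivity)]
  have hpart1 : ∫ u in Set.Ioo (-(L/2)) (-ε), 1 / |u| = Real.log (L/2) - Real.log ε := by
    rw [← MeasureTheory.integral_Ioc_eq_integral_Ioo]
    have hcongr : ∫ u in Set.Ioc (-(L/2)) (-ε), 1 / |u| =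
        ∫ u in Set.Ioc (-(L/2)) (-ε), 1 / (-u) := by
      apply setIntegral_congr_fun measurableSet_Ioc
      intro x hx
      simp only [abs_of_neg (by linarith [hx.2] : x < 0)]
    rw [hcongr, ← intervalIntegral.integral_of_le (by linarith)]
    have := intervalIntegral.integral_comp_neg (a := -(L/2)) (b := -ε) (fun x => 1 / x)
    rw [this, neg_neg, neg_neg, integral_one_div
      (by simp only [Set.uIcc_of_le (by linarith : ε ≤ L/2), Set.mem_Icc]; push_neg; intro h; linarith),
      Real.log_div (by positivity) (by positivity)]
  rw [hpart1, hpart2]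
  ring

end Stmt12Aux

set_option maxHeartbeats 1000000 in
/-- Existence of the Hadamard regularization of Neumann's self-inductance integral:
for a smooth simple closed curve `Γ` of length `L` (given in arc-length
parametrization), the limit as `ε → 0⁺` of
`(μ₀/4π) ∬_{(Γ×Γ)∖Δ_ε} (dx₁·dx₂)/|x₁-x₂| + (μ₀ L/2π) log ε` exists. -/
theorem stmt12 (μ₀ L : ℝ) (hμ₀ : 0 < μ₀) (hL : 0 < L)
    (γ : ℝ → EuclideanSpace ℝ (Fin 3)) (hγ : ContDiff ℝ (⊤ : ℕ∞) γ)
    (hper : ∀ s, γ (s + L) = γ s) (harc : ∀ s, ‖deriv γ s‖ = 1)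
    (hsimple : Set.InjOn γ (Set.Ico 0 L)) :
    ∃ H : ℝ, Tendsto (fun ε : ℝ =>
      μ₀ / (4 * π) *
        (∫ p in {p : ℝ × ℝ | p ∈ Set.Ioc 0 L ×ˢ Set.Ioc 0 L ∧ ε < ‖γ p.1 - γ p.2‖},
          ⟪deriv γ p.1, deriv γ p.2⟫ / ‖γ p.1 - γ p.2‖) +
      μ₀ * L / (2 * π) * Real.log ε) (𝓝[>] (0:ℝ)) (𝓝 H) := by
  classical
  have hγ' : ContDiff ℝ ((⊤ : ℕ∞) : WithTop ℕ∞) γ := hγ.of_le (by simp)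
  have hγcont : Continuous γ := hγ.continuous
  have hγdiff : Differentiable ℝ γ := hγ.differentiable (by simp)
  set c : ℝ → EuclideanSpace ℝ (Fin 3) := deriv γ with hcdef
  have hcCD : ContDiff ℝ ((⊤ : ℕ∞) : WithTop ℕ∞) c := (contDiff_infty_iff_deriv.mp hγ').2
  have hccont : Continuous c := hcCD.continuous
  have hcdiff : Differentiable ℝ c := hcCD.differentiable (by simp)
  have hc'cont : Continuous (deriv c) := hcCD.continuous_deriv (by simp)
  have hcper : ∀ x, c (x + L) = c x := Stmt12Aux.periodic_deriv' hper
  have hc'per : ∀ x, deriv c (x + L) = deriv c x := Stmt12Aux.periodic_deriv' hcper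
  obtain ⟨M₀, hM₀⟩ := Stmt12Aux.bounded_of_periodic hL hc'cont hc'per
  set M : ℝ := max M₀ 1 with hMdef
  have hM1 : 1 ≤ M := le_max_right _ _
  have hM0 : 0 < M := lt_of_lt_of_le one_pos hM1
  have hMb : ∀ s, ‖deriv c s‖ ≤ M := fun s => (hM₀ s).trans (le_max_left _ _)
  have hlipc : ∀ a b : ℝ, ‖c b - c a‖ ≤ M * |b - a| := fun a b =>
    Stmt12Aux.norm_sub_le_mul hcdiff hc'cont hMb a b
  have hlipγ : ∀ a b : ℝ, ‖γ b - γ a‖ ≤ |b - a| := by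
    intro a b
    have h := Stmt12Aux.norm_sub_le_mul (M := 1) hγdiff hccont
      (fun s => le_of_eq (harc s)) a b
    linarith
  have hlow : ∀ s u : ℝ, |u| - M * u ^ 2 ≤ ‖γ (s + u) - γ s‖ :=
    Stmt12Aux.chord_lower hγdiff hccont harc hM0.le hlipc
  obtain ⟨c₀, hc₀pos, hc₀le1, hc₀⟩ := Stmt12Aux.chord_global hL hγcont hper hsimple hM1 hlow
  have hinner1 : ∀ a b : ℝ, |⟪c a, c b⟫| ≤ 1 := by
    intro a b
    calc |⟪c a, c b⟫| ≤ ‖c a‖ * ‖c b‖ := abs_real_inner_le_norm _ _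
      _ = 1 := by rw [hcdef, harc, harc, mul_one]
  have hinner2 : ∀ a b : ℝ, |⟪c a, c b⟫ - 1| ≤ M ^ 2 * (b - a) ^ 2 := by
    intro a b
    have h1 : ‖c a - c b‖ ^ 2 = 2 - 2 * ⟪c a, c b⟫ := by
      rw [norm_sub_sq_real, hcdef, harc, harc]; ring
    have h2 : ‖c a - c b‖ ≤ M * |a - b| := hlipc b a
    have h3 : (M * |a - b|) ^ 2 = M ^ 2 * (b - a) ^ 2 := by
      rw [mul_pow, sq_abs]; ring
    have h4 : ‖c a - c b‖ ^ 2 ≤ M ^ 2 * (b - a) ^ 2 := by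
      rw [← h3]
      have := norm_nonneg (c a - c b)
      nlinarith [abs_nonneg (a - b), mul_nonneg hM0.le (abs_nonneg (a - b))]
    rw [abs_le]
    constructor <;> nlinarith [sq_nonneg ‖c a - c b‖, norm_nonneg (c a - c b)]
  -- main objects
  set F : ℝ × ℝ → ℝ := fun p => ⟪c p.1, c (p.1 + p.2)⟫ / ‖γ p.1 - γ (p.1 + p.2)‖ with hFdef
  set G : ℝ × ℝ → ℝ := fun p => F p - 1 / |p.2| with hGdef
  set box' : Set (ℝ × ℝ) := Set.Ioc 0 L ×ˢ Set.Ioc (-(L/2)) (L/2) with hbox'def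
  set box'' : Set (ℝ × ℝ) := box' ∩ {p : ℝ × ℝ | p.2 ≠ 0} with hbox''def
  have hchordcont : Continuous (fun p : ℝ × ℝ => ‖γ p.1 - γ (p.1 + p.2)‖) :=
    ((hγcont.comp continuous_fst).sub (hγcont.comp (continuous_fst.add continuous_snd))).norm
  have hFmeas : Measurable F :=
    (Continuous.inner (hccont.comp continuous_fst)
      (hccont.comp (continuous_fst.add continuous_snd))).measurable.div hchordcont.measurable
  have habs2meas : Measurable (fun p : ℝ × ℝ => 1 / |p.2|) :=
    measurable_const.div (continuous_abs.comp continuous_snd).measurable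
  have hGmeas : Measurable G := hFmeas.sub habs2meas
  have hbox'meas : MeasurableSet box' := measurableSet_Ioc.prod measurableSet_Ioc
  have hbox''meas : MeasurableSet box'' := by
    apply hbox'meas.inter
    have : {p : ℝ × ℝ | p.2 ≠ 0} = (Prod.snd ⁻¹' {(0:ℝ)})ᶜ := rfl
    rw [this]
    exact (measurable_snd (measurableSet_singleton 0)).compl
  have hvolIocL : volume (Set.Ioc (0:ℝ) L) = ENNReal.ofReal L := by
    rw [Real.volume_Ioc, sub_zero]
  have hvol' : volume box' < ⊤ := by
    rw [hbox'def, Measure.volume_eq_prod, Measure.prod_prod, hvolIocL, Real.volume_Ioc]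
    exact ENNReal.mul_lt_top ENNReal.ofReal_lt_top ENNReal.ofReal_lt_top
  have hvol'' : volume box'' < ⊤ :=
    lt_of_le_of_lt (measure_mono Set.inter_subset_left) hvol'
  have hvol12 : volume (Set.Ioc (0:ℝ) L ×ˢ Set.Ioc (0:ℝ) L) < ⊤ := by
    rw [Measure.volume_eq_prod, Measure.prod_prod, hvolIocL]
    exact ENNReal.mul_lt_top ENNReal.ofReal_lt_top ENNReal.ofReal_lt_top
  have intOn : ∀ (f : ℝ × ℝ → ℝ) (s : Set (ℝ × ℝ)) (C : ℝ), Measurable f → MeasurableSet s →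
      volume s < ⊤ → (∀ p ∈ s, |f p| ≤ C) → IntegrableOn f s volume := by
    intro f s C hf hs hfin hb
    apply Measure.integrableOn_of_bounded hfin.ne hf.aestronglyMeasurable (M := C)
    rw [ae_restrict_iff' hs]
    filter_upwards with x hx
    rw [Real.norm_eq_abs]
    exact hb x hx
  -- pointwise chord estimates
  have hchord_le : ∀ p : ℝ × ℝ, ‖γ p.1 - γ (p.1 + p.2)‖ ≤ |p.2| := by
    intro p
    have h := hlipγ (p.1 + p.2) p.1
    have h2 : p.1 - (p.1 + p.2) = -p.2 := by ring
    rw [h2, abs_neg] at h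
    exact h
  have habs_le : ∀ p : ℝ × ℝ, p ∈ box' → |p.2| ≤ L/2 := by
    intro p hp
    exact abs_le.mpr ⟨le_of_lt hp.2.1, hp.2.2⟩
  have hchord_ge : ∀ p : ℝ × ℝ, p ∈ box' → c₀ * |p.2| ≤ ‖γ p.1 - γ (p.1 + p.2)‖ := by
    intro p hp
    rw [norm_sub_rev]
    exact hc₀ p.1 p.2 (habs_le p hp)
  have hchord_ge2 : ∀ p : ℝ × ℝ, |p.2| - M * |p.2| ^ 2 ≤ ‖γ p.1 - γ (p.1 + p.2)‖ := by
    intro p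
    rw [norm_sub_rev, sq_abs]
    exact hlow p.1 p.2
  set Cg : ℝ := M^2*L/(2*c₀) + M/c₀ with hCgdef
  have hCg0 : 0 ≤ Cg := by positivity
  have hGbound : ∀ p ∈ box'', |G p| ≤ Cg := by
    intro p hp
    obtain ⟨hp', hpne⟩ := hp
    have hu0 : 0 < |p.2| := abs_pos.mpr hpne
    have huL : |p.2| ≤ L/2 := habs_le p hp'
    have hd1 : c₀ * |p.2| ≤ ‖γ p.1 - γ (p.1 + p.2)‖ := hchord_ge p hp'
    have hd0 : 0 < ‖γ p.1 - γ (p.1 + p.2)‖ := lt_of_lt_of_le (by positivity) hd1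
    have hd2 : ‖γ p.1 - γ (p.1 + p.2)‖ ≤ |p.2| := hchord_le p
    have hd3 : |p.2| - M * |p.2|^2 ≤ ‖γ p.1 - γ (p.1 + p.2)‖ := hchord_ge2 p
    have ht1 : |⟪c p.1, c (p.1 + p.2)⟫ - 1| ≤ M^2 * |p.2|^2 := by
      have h := hinner2 p.1 (p.1 + p.2)
      have h2 : (p.1 + p.2 - p.1)^2 = |p.2|^2 := by rw [sq_abs]; ring
      rw [h2] at h
      exact h
    have hGp : G p = (⟪c p.1, c (p.1 + p.2)⟫ - 1)/‖γ p.1 - γ (p.1 + p.2)‖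
        + (|p.2| - ‖γ p.1 - γ (p.1 + p.2)‖)/(‖γ p.1 - γ (p.1 + p.2)‖ * |p.2|) := by
      rw [hGdef, hFdef]
      field_simp
      ring
    have hb1 : |(⟪c p.1, c (p.1 + p.2)⟫ - 1)/‖γ p.1 - γ (p.1 + p.2)‖| ≤ M^2*L/(2*c₀) := by
      rw [abs_div, abs_of_pos hd0]
      calc |⟪c p.1, c (p.1 + p.2)⟫ - 1| / ‖γ p.1 - γ (p.1 + p.2)‖
          ≤ (M^2 * |p.2|^2) / (c₀ * |p.2|) := div_le_div₀ (by positivity) ht1 (by positivity) hd1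
        _ = (M^2 * |p.2|) / c₀ := by
            rw [show M^2 * |p.2|^2 = M^2 * |p.2| * |p.2| by ring]
            exact mul_div_mul_right _ _ (ne_of_gt hu0)
        _ ≤ (M^2 * (L/2)) / c₀ := by gcongr
        _ = M^2*L/(2*c₀) := by ring
    have hb2 : |(|p.2| - ‖γ p.1 - γ (p.1 + p.2)‖)/(‖γ p.1 - γ (p.1 + p.2)‖ * |p.2|)| ≤ M/c₀ := by
      rw [abs_div, abs_of_nonneg (by linarith : (0:ℝ) ≤ |p.2| - ‖γ p.1 - γ (p.1 + p.2)‖),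
        abs_of_pos (by positivity : (0:ℝ) < ‖γ p.1 - γ (p.1 + p.2)‖ * |p.2|)]
      calc (|p.2| - ‖γ p.1 - γ (p.1 + p.2)‖) / (‖γ p.1 - γ (p.1 + p.2)‖ * |p.2|)
          ≤ (M * |p.2|^2) / ((c₀ * |p.2|) * |p.2|) :=
            div_le_div₀ (by positivity) (by linarith) (by positivity)
              (mul_le_mul_of_nonneg_right hd1 hu0.le)
        _ = M / c₀ := by
            rw [show M*|p.2|^2 = M*(|p.2| * |p.2|) by ring,
              show (c₀ * |p.2|) * |p.2| = c₀*(|p.2| * |p.2|) by ring]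
            exact mul_div_mul_right _ _ (ne_of_gt (mul_pos hu0 hu0))
    calc |G p| ≤ |(⟪c p.1, c (p.1 + p.2)⟫ - 1)/‖γ p.1 - γ (p.1 + p.2)‖|
          + |(|p.2| - ‖γ p.1 - γ (p.1 + p.2)‖)/(‖γ p.1 - γ (p.1 + p.2)‖ * |p.2|)| := by
          rw [hGp]; exact abs_add_le _ _
      _ ≤ Cg := by rw [hCgdef]; linarith
  set K : ℝ := M / c₀^2 with hKdef
  have hK0 : 0 ≤ K := by positivity
  have hGint : IntegrableOn G box'' volume := intOn G box'' Cg hGmeas hbox''meas hvol'' hGbound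
  set Jstar : ℝ := (∫ p in box'', G p) + 2*L*Real.log (L/2) with hJdef
  set A : ℝ := 2*L*Cg/c₀ + 2*L*K with hAdef
  have hA0 : 0 ≤ A := by positivity
  have normBound : ∀ (f : ℝ × ℝ → ℝ) (D : Set (ℝ × ℝ)) (J : Set ℝ) (C r : ℝ),
      Measurable f → 0 ≤ C → 0 ≤ r →
      D ⊆ Set.Ioc 0 L ×ˢ J → volume J ≤ ENNReal.ofReal r →
      (∀ p ∈ D, |f p| ≤ C) → |∫ p in D, f p| ≤ C * (L * r) := by
    intro f D J C r hf hC hr hsub hJvol hb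
    have hDvol : volume D ≤ ENNReal.ofReal (L * r) := by
      calc volume D ≤ volume (Set.Ioc 0 L ×ˢ J) := measure_mono hsub
        _ = volume (Set.Ioc (0:ℝ) L) * volume J := by
            rw [Measure.volume_eq_prod, Measure.prod_prod]
        _ ≤ ENNReal.ofReal L * ENNReal.ofReal r := by
            rw [hvolIocL]; gcongr
        _ = ENNReal.ofReal (L * r) := (ENNReal.ofReal_mul hL.le).symm
    rw [← Real.norm_eq_abs]
    calc ‖∫ p in D, f p‖ ≤ C * (volume D).toReal :=
        norm_setIntegral_le_of_norm_le_const (lt_of_le_of_lt hDvol ENNReal.ofReal_lt_top)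
          (fun x hx => by rw [Real.norm_eq_abs]; exact hb x hx)
      _ ≤ C * (L * r) := by
        apply mul_le_mul_of_nonneg_left _ hC
        calc (volume D).toReal ≤ (ENNReal.ofReal (L*r)).toReal :=
            ENNReal.toReal_mono ENNReal.ofReal_ne_top hDvol
          _ = L * r := ENNReal.toReal_ofReal (by positivity)
  have key : ∀ ε : ℝ, 0 < ε → ε < L/2 →
      |(∫ p in {p : ℝ × ℝ | p ∈ Set.Ioc 0 L ×ˢ Set.Ioc 0 L ∧ ε < ‖γ p.1 - γ p.2‖},
          ⟪c p.1, c p.2⟫ / ‖γ p.1 - γ p.2‖) + 2*L*Real.log ε - Jstar| ≤ A * ε := by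
    intro ε hε hεL
    set T : Set (ℝ × ℝ) := {p : ℝ × ℝ | ε < ‖γ p.1 - γ p.2‖} with hTdef
    have hTmeas : MeasurableSet T := measurableSet_lt measurable_const
      ((hγcont.comp continuous_fst).sub (hγcont.comp continuous_snd)).norm.measurable
    set Sε : Set (ℝ × ℝ) := box' ∩ {p : ℝ × ℝ | ε < ‖γ p.1 - γ (p.1 + p.2)‖} with hSdef
    have hSmeas : MeasurableSet Sε := hbox'meas.inter
      (measurableSet_lt measurable_const hchordcont.measurable)
    set Aε : Set (ℝ × ℝ) := box' ∩ {p : ℝ × ℝ | ε < |p.2|} with hAdef2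
    have hAmeas : MeasurableSet Aε := hbox'meas.inter
      (measurableSet_lt measurable_const (continuous_abs.comp continuous_snd).measurable)
    have hSsubA : Sε ⊆ Aε := by
      rintro p ⟨hp1, hp2⟩
      exact ⟨hp1, lt_of_lt_of_le hp2 (hchord_le p)⟩
    have hSsubB : Sε ⊆ box'' := by
      rintro p ⟨hp1, hp2⟩
      refine ⟨hp1, fun h0 => ?_⟩
      have h1 : |p.2| = 0 := by rw [h0, abs_zero]
      have h2 : ε < ‖γ p.1 - γ (p.1 + p.2)‖ := hp2
      linarith [hchord_le p]
    set Ψ : ℝ × ℝ → ℝ := T.indicator (fun p => ⟪c p.1, c p.2⟫ / ‖γ p.1 - γ p.2‖) with hΨdef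
    have hΨmeas : Measurable Ψ := ((Continuous.inner (hccont.comp continuous_fst)
      (hccont.comp continuous_snd)).measurable.div
      ((hγcont.comp continuous_fst).sub (hγcont.comp continuous_snd)).norm.measurable).indicator
      hTmeas
    have hΨbound : ∀ p : ℝ × ℝ, |Ψ p| ≤ 1/ε := by
      intro p
      rw [hΨdef]
      by_cases hp : p ∈ T
      · rw [Set.indicator_of_mem hp]
        have hd : ε < ‖γ p.1 - γ p.2‖ := hp
        rw [abs_div, abs_of_nonneg (norm_nonneg _)]
        exact div_le_div₀ (by norm_num) (hinner1 _ _) hε hd.le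
      · rw [Set.indicator_of_notMem hp]
        simp only [abs_zero]
        positivity
    have hsetA : {p : ℝ × ℝ | p ∈ Set.Ioc 0 L ×ˢ Set.Ioc 0 L ∧ ε < ‖γ p.1 - γ p.2‖}
        = (Set.Ioc 0 L ×ˢ Set.Ioc 0 L) ∩ T := by
      ext p
      simp only [Set.mem_setOf_eq, Set.mem_inter_iff, hTdef]
    have hIntΨ : IntegrableOn Ψ (Set.Ioc 0 L ×ˢ Set.Ioc 0 L) volume :=
      intOn Ψ _ (1/ε) hΨmeas (measurableSet_Ioc.prod measurableSet_Ioc) hvol12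
        (fun p _ => hΨbound p)
    have hΨper : ∀ s y : ℝ, Ψ (s, y + L) = Ψ (s, y) := by
      intro s y
      rw [hΨdef]
      simp only [Set.indicator_apply, hTdef, Set.mem_setOf_eq, hper, hcper]
    have hΦmeas : Measurable (fun p : ℝ × ℝ => Ψ (p.1, p.1 + p.2)) :=
      hΨmeas.comp (measurable_fst.prodMk (measurable_fst.add measurable_snd))
    have hIntΦ : IntegrableOn (fun p : ℝ × ℝ => Ψ (p.1, p.1 + p.2)) box' volume :=
      intOn _ _ (1/ε) hΦmeas hbox'meas hvol' (fun p _ => hΨbound _)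
    have stepA : (∫ p in {p : ℝ × ℝ | p ∈ Set.Ioc 0 L ×ˢ Set.Ioc 0 L ∧ ε < ‖γ p.1 - γ p.2‖},
        ⟪c p.1, c p.2⟫ / ‖γ p.1 - γ p.2‖) = ∫ p in Sε, F p := by
      rw [hsetA, ← setIntegral_indicator hTmeas, ← hΨdef]
      have e1 : ∫ p in Set.Ioc 0 L ×ˢ Set.Ioc 0 L, Ψ p
          = ∫ s in Set.Ioc 0 L, ∫ y in Set.Ioc 0 L, Ψ (s, y) := by
        rw [Measure.volume_eq_prod]
        exact setIntegral_prod Ψ (by rw [← Measure.volume_eq_prod]; exact hIntΨ)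
      have e2 : ∀ s : ℝ, (∫ y in Set.Ioc 0 L, Ψ (s, y))
          = ∫ u in Set.Ioc (-(L/2)) (L/2), Ψ (s, s + u) := by
        intro s
        have hper' : Function.Periodic (fun y => Ψ (s, y)) L := fun y => hΨper s y
        calc (∫ y in Set.Ioc 0 L, Ψ (s, y)) = ∫ y in (0:ℝ)..L, Ψ (s, y) :=
            (intervalIntegral.integral_of_le hL.le).symm
          _ = ∫ y in (0:ℝ)..(0+L), Ψ (s, y) := by rw [zero_add]
          _ = ∫ y in (s - L/2)..((s - L/2) + L), Ψ (s, y) :=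
            hper'.intervalIntegral_add_eq 0 (s - L/2)
          _ = ∫ u in (-(L/2))..(L/2), Ψ (s, s + u) := by
            rw [intervalIntegral.integral_comp_add_left (fun y => Ψ (s, y)) s]
            congr 1 <;> ring
          _ = ∫ u in Set.Ioc (-(L/2)) (L/2), Ψ (s, s + u) :=
            intervalIntegral.integral_of_le (by linarith)
      have e3 : (∫ s in Set.Ioc 0 L, ∫ u in Set.Ioc (-(L/2)) (L/2), Ψ (s, s + u))
          = ∫ p in box', Ψ (p.1, p.1 + p.2) := by
        rw [hbox'def, Measure.volume_eq_prod]
        exact (setIntegral_prod (fun p : ℝ × ℝ => Ψ (p.1, p.1 + p.2))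
          (by rw [← Measure.volume_eq_prod]; exact hIntΦ)).symm
      have e4 : (∫ p in box', Ψ (p.1, p.1 + p.2)) = ∫ p in Sε, F p := by
        have hfun : (fun p : ℝ × ℝ => Ψ (p.1, p.1 + p.2))
            = Set.indicator {p : ℝ × ℝ | ε < ‖γ p.1 - γ (p.1 + p.2)‖} F := by
          funext p
          rw [hΨdef, hFdef]
          simp only [Set.indicator_apply, hTdef, Set.mem_setOf_eq]
        rw [hfun, setIntegral_indicator (measurableSet_lt measurable_const
          hchordcont.measurable), hSdef]
      rw [e1, setIntegral_congr_fun measurableSet_Ioc (fun s _ => e2 s), e3, e4]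
    obtain ⟨E₁, hE₁def⟩ : ∃ x : ℝ, x = ∫ p in box'' \ Sε, G p := ⟨_, rfl⟩
    obtain ⟨E₂, hE₂def⟩ : ∃ x : ℝ, x = ∫ p in Aε \ Sε, (fun p : ℝ × ℝ => 1 / |p.2|) p := ⟨_, rfl⟩
    have hhintA : IntegrableOn (fun p : ℝ × ℝ => 1 / |p.2|) Aε volume := by
      apply intOn _ _ (1/ε) habs2meas hAmeas
        (lt_of_le_of_lt (measure_mono Set.inter_subset_left) hvol')
      rintro p ⟨_, hp2⟩
      rw [abs_of_nonneg (by positivity)]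
      exact one_div_le_one_div_of_le hε (le_of_lt hp2)
    have stepB : (∫ p in Sε, F p)
        = (∫ p in Sε, G p) + ∫ p in Sε, (fun p : ℝ × ℝ => 1 / |p.2|) p := by
      have h1 : Set.EqOn F (fun p : ℝ × ℝ => G p + 1 / |p.2|) Sε := by
        intro p _
        rw [hGdef]
        ring
      rw [setIntegral_congr_fun hSmeas h1]
      exact integral_add (hGint.mono_set hSsubB) (hhintA.mono_set hSsubA)
    have stepC : (∫ p in Sε, G p) = (∫ p in box'', G p) - E₁ := by
      have h2 := integral_diff hSmeas hGint hSsubB (f := G) (μ := volume)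
      rw [hE₁def]
      linarith [h2]
    have stepD : (∫ p in Sε, (fun p : ℝ × ℝ => 1 / |p.2|) p)
        = (∫ p in Aε, (fun p : ℝ × ℝ => 1 / |p.2|) p) - E₂ := by
      have h2 := integral_diff hSmeas hhintA hSsubA
      rw [hE₂def]
      linarith [h2]
    have stepE : (∫ p in Aε, (fun p : ℝ × ℝ => 1 / |p.2|) p)
        = L * (2 * (Real.log (L/2) - Real.log ε)) := by
      have hAeq : Aε = Set.Ioc 0 L ×ˢ (Set.Ioc (-(L/2)) (L/2) ∩ {u : ℝ | ε < |u|}) := by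
        ext p
        simp only [hAdef2, hbox'def, Set.mem_inter_iff, Set.mem_prod, Set.mem_setOf_eq]
        tauto
      have h2 := setIntegral_prod_mul (μ := (volume : Measure ℝ)) (ν := (volume : Measure ℝ))
        (fun _ : ℝ => (1:ℝ)) (fun u : ℝ => 1 / |u|) (Set.Ioc 0 L)
        (Set.Ioc (-(L/2)) (L/2) ∩ {u : ℝ | ε < |u|})
      simp only [one_mul] at h2
      rw [hAeq]
      refine Eq.trans h2 ?_
      rw [Stmt12Aux.integral_one_div_abs hL hε hεL, setIntegral_const]
      simp only [smul_eq_mul, mul_one, Real.volume_real_Ioc_of_le hL.le, sub_zero]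
    have hboundE₁ : |E₁| ≤ Cg * (L * (2*(ε/c₀))) := by
      rw [hE₁def]
      apply normBound G _ (Set.Icc (-(ε/c₀)) (ε/c₀)) Cg (2*(ε/c₀)) hGmeas hCg0 (by positivity)
        ?_ ?_ ?_
      · rintro p ⟨⟨hp1, _⟩, hpS⟩
        refine ⟨hp1.1, ?_⟩
        have hch : ¬ ε < ‖γ p.1 - γ (p.1 + p.2)‖ := fun h => hpS ⟨hp1, h⟩
        push_neg at hch
        have h3 := hchord_ge p hp1
        have habs : |p.2| ≤ ε / c₀ := by
          rw [le_div_iff₀ hc₀pos]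
          nlinarith
        exact Set.mem_Icc.mpr (abs_le.mp habs)
      · rw [Real.volume_Icc]
        exact le_of_eq (by congr 1; ring)
      · intro p hp
        exact hGbound p hp.1
    have hboundE₂ : |E₂| ≤ (1/ε) * (L * (2*(K*ε^2))) := by
      rw [hE₂def]
      apply normBound _ _ (Set.Ioc ε (ε + K*ε^2) ∪ Set.Icc (-(ε + K*ε^2)) (-ε)) (1/ε)
        (2*(K*ε^2)) habs2meas (by positivity) (by positivity) ?_ ?_ ?_
      · rintro p ⟨⟨hp1, hpgt⟩, hpS⟩
        refine ⟨hp1.1, ?_⟩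
        have hch : ‖γ p.1 - γ (p.1 + p.2)‖ ≤ ε := by
          by_contra h
          push_neg at h
          exact hpS ⟨hp1, h⟩
        have h1 : c₀ * |p.2| ≤ ε := le_trans (hchord_ge p hp1) hch
        have h2 : |p.2| ≤ ε / c₀ := by
          rw [le_div_iff₀ hc₀pos]
          nlinarith
        have hgt : ε < |p.2| := hpgt
        have h3 : |p.2| ≤ ε + K * ε^2 := by
          have h4 := hchord_ge2 p
          have h5 : |p.2| ≤ ε + M * |p.2|^2 := by linarith
          have h6' : |p.2| * |p.2| ≤ (ε/c₀) * (ε/c₀) := mul_self_le_mul_self (abs_nonneg p.2) h2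
          have h6 : M * |p.2|^2 ≤ M * (ε/c₀)^2 := by
            rw [sq, sq]
            exact mul_le_mul_of_nonneg_left h6' hM0.le
          have h7 : M * (ε/c₀)^2 = K * ε^2 := by rw [hKdef]; field_simp; try ring
          linarith
        rcases le_or_gt 0 p.2 with h0 | h0
        · left
          rw [abs_of_nonneg h0] at hgt h3
          exact ⟨hgt, h3⟩
        · right
          rw [abs_of_neg h0] at hgt h3
          exact Set.mem_Icc.mpr ⟨by linarith, by linarith⟩
      · calc volume (Set.Ioc ε (ε + K*ε^2) ∪ Set.Icc (-(ε + K*ε^2)) (-ε))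
            ≤ volume (Set.Ioc ε (ε + K*ε^2)) + volume (Set.Icc (-(ε + K*ε^2)) (-ε)) :=
            measure_union_le _ _
          _ = ENNReal.ofReal (K*ε^2) + ENNReal.ofReal (K*ε^2) := by
              rw [Real.volume_Ioc, Real.volume_Icc]
              congr 1 <;> (congr 1; ring)
          _ = ENNReal.ofReal (2*(K*ε^2)) := by
              rw [← ENNReal.ofReal_add (by positivity) (by positivity)]
              congr 1
              ring
      · rintro p ⟨⟨_, hpgt⟩, _⟩
        have hgt : ε < |p.2| := hpgt
        rw [abs_of_nonneg (by positivity)]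
        exact one_div_le_one_div_of_le hε hgt.le
    have hE₂' : (1/ε) * (L * (2*(K*ε^2))) = 2*L*K*ε := by
      field_simp
    have hmain : (∫ p in {p : ℝ × ℝ | p ∈ Set.Ioc 0 L ×ˢ Set.Ioc 0 L ∧ ε < ‖γ p.1 - γ p.2‖},
        ⟪c p.1, c p.2⟫ / ‖γ p.1 - γ p.2‖) + 2*L*Real.log ε - Jstar = -(E₁ + E₂) := by
      rw [stepA, stepB, stepC, stepD, stepE, hJdef]
      ring
    rw [hmain, abs_neg]
    calc |E₁ + E₂| ≤ |E₁| + |E₂| := abs_add_le _ _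
      _ ≤ Cg * (L * (2*(ε/c₀))) + 2*L*K*ε := by
          rw [← hE₂']
          exact add_le_add hboundE₁ hboundE₂
      _ = A * ε := by
          rw [hAdef]
          field_simp
  refine ⟨μ₀ / (4*π) * Jstar, ?_⟩
  rw [tendsto_iff_dist_tendsto_zero]
  have hπ : (0:ℝ) < π := Real.pi_pos
  have hcoef : (0:ℝ) < μ₀ / (4*π) := by positivity
  refine squeeze_zero' (g := fun ε : ℝ => μ₀ / (4*π) * (A * ε))
    (Filter.Eventually.of_forall fun ε => dist_nonneg) ?_ ?_
  · have hev : ∀ᶠ ε in 𝓝[>] (0:ℝ), ε ∈ Set.Ioo 0 (L/2) :=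
      Filter.eventually_of_mem (Ioo_mem_nhdsGT (by positivity))
        fun x hx => hx
    filter_upwards [hev] with ε hε
    have hkey := key ε hε.1 hε.2
    simp only [Real.dist_eq]
    have hre : (μ₀ / (4 * π) * (∫ p in {p : ℝ × ℝ | p ∈ Set.Ioc 0 L ×ˢ Set.Ioc 0 L ∧
          ε < ‖γ p.1 - γ p.2‖}, ⟪c p.1, c p.2⟫ / ‖γ p.1 - γ p.2‖)
          + μ₀ * L / (2 * π) * Real.log ε) - μ₀ / (4*π) * Jstar
        = μ₀ / (4*π) * ((∫ p in {p : ℝ × ℝ | p ∈ Set.Ioc 0 L ×ˢ Set.Ioc 0 L ∧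
          ε < ‖γ p.1 - γ p.2‖}, ⟪c p.1, c p.2⟫ / ‖γ p.1 - γ p.2‖)
          + 2*L*Real.log ε - Jstar) := by
      field_simp
      ring
    rw [hre, abs_mul, abs_of_pos hcoef]
    exact mul_le_mul_of_nonneg_left hkey hcoef.le
  · have h1 : Tendsto (fun ε : ℝ => μ₀ / (4*π) * (A * ε)) (𝓝 0)
        (𝓝 (μ₀ / (4*π) * (A * 0))) :=
      (continuous_const.mul (continuous_const.mul continuous_id)).tendsto 0
    simpa using h1.mono_left nhdsWithin_le_nhds
end

section
/- The Hadamard-regularized Neumann self-inductance scales under homothety as H_N(λΓ) = λ H_N(Γ) + (μ₀ L/2π) λ log λ for all λ > 0, where L is the length of Γ. -/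
open MeasureTheory Filter Topology Real

open scoped RealInnerProductSpace

/-- Behaviour of the Hadamard-regularized Neumann self-inductance under homothety:
`H_N(λΓ) = λ H_N(Γ) + (μ₀ L/2π) λ log λ` for `λ > 0`, where `L` is the length of `Γ`
and `λΓ` is the image of `Γ` under scaling by `λ` (arc-length parametrized by
`s ↦ λ • γ(s/λ)` on `[0, λL]`). -/
theorem stmt14 (μ₀ L lam : ℝ) (hμ₀ : 0 < μ₀) (hL : 0 < L) (hlam : 0 < lam)
    (γ : ℝ → EuclideanSpace ℝ (Fin 3)) (hγ : ContDiff ℝ (⊤ : ℕ∞) γ)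
    (hper : ∀ s, γ (s + L) = γ s) (harc : ∀ s, ‖deriv γ s‖ = 1)
    (hsimple : Set.InjOn γ (Set.Ico 0 L))
    (γl : ℝ → EuclideanSpace ℝ (Fin 3)) (hγl : γl = fun s => lam • γ (s / lam))
    (H Hl : ℝ)
    (hH : Tendsto (fun ε : ℝ =>
      μ₀ / (4 * π) *
        (∫ p in {p : ℝ × ℝ | p ∈ Set.Ioc 0 L ×ˢ Set.Ioc 0 L ∧ ε < ‖γ p.1 - γ p.2‖},
          ⟪deriv γ p.1, deriv γ p.2⟫ / ‖γ p.1 - γ p.2‖) +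
      μ₀ * L / (2 * π) * Real.log ε) (𝓝[>] (0:ℝ)) (𝓝 H))
    (hHl : Tendsto (fun ε : ℝ =>
      μ₀ / (4 * π) *
        (∫ p in {p : ℝ × ℝ | p ∈ Set.Ioc 0 (lam * L) ×ˢ Set.Ioc 0 (lam * L) ∧
            ε < ‖γl p.1 - γl p.2‖},
          ⟪deriv γl p.1, deriv γl p.2⟫ / ‖γl p.1 - γl p.2‖) +
      μ₀ * (lam * L) / (2 * π) * Real.log ε) (𝓝[>] (0:ℝ)) (𝓝 Hl)) :
    Hl = lam * H + μ₀ * L / (2 * π) * (lam * Real.log lam) := by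
  have hlam' : lam ≠ 0 := ne_of_gt hlam
  have hdiff : Differentiable ℝ γ := hγ.differentiable (by simp)
  -- derivative of scaled curve
  have hderivl : ∀ s, deriv γl s = deriv γ (s / lam) := by
    intro s
    have h1 : HasDerivAt (fun x : ℝ => x / lam) (1 / lam) s := by
      simpa using (hasDerivAt_id s).div_const lam
    have h2 : HasDerivAt γ (deriv γ (s / lam)) (s / lam) := (hdiff (s / lam)).hasDerivAt
    have h3 : HasDerivAt (fun x => γ (x / lam)) ((1 / lam) • deriv γ (s / lam)) s := by
      simpa [Function.comp_def] using h2.scomp s h1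
    have h4 : HasDerivAt γl (lam • (1 / lam) • deriv γ (s / lam)) s := by
      rw [hγl]; exact h3.const_smul lam
    rw [h4.deriv, smul_smul, mul_one_div, div_self hlam', one_smul]
  -- norm of differences for scaled curve
  have hnorm : ∀ a b : ℝ, ‖γl a - γl b‖ = lam * ‖γ (a / lam) - γ (b / lam)‖ := by
    intro a b
    rw [hγl]
    simp only []
    rw [← smul_sub, norm_smul, Real.norm_eq_abs, abs_of_pos hlam]
  set F : ℝ × ℝ → ℝ := fun p => ⟪deriv γ p.1, deriv γ p.2⟫ / ‖γ p.1 - γ p.2‖ with hF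
  set Fl : ℝ × ℝ → ℝ := fun p => ⟪deriv γl p.1, deriv γl p.2⟫ / ‖γl p.1 - γl p.2‖ with hFl
  set S : ℝ → Set (ℝ × ℝ) := fun ε =>
    {p : ℝ × ℝ | p ∈ Set.Ioc 0 L ×ˢ Set.Ioc 0 L ∧ ε < ‖γ p.1 - γ p.2‖} with hS
  set Sl : ℝ → Set (ℝ × ℝ) := fun ε =>
    {p : ℝ × ℝ | p ∈ Set.Ioc 0 (lam * L) ×ˢ Set.Ioc 0 (lam * L) ∧ ε < ‖γl p.1 - γl p.2‖} with hSl
  have hcont : Continuous fun p : ℝ × ℝ => ‖γ p.1 - γ p.2‖ :=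
    ((hγ.continuous.comp continuous_fst).sub (hγ.continuous.comp continuous_snd)).norm
  have hcontl : Continuous γl := by
    rw [hγl]; exact (hγ.continuous.comp (continuous_id.div_const lam)).const_smul lam
  have hcontl' : Continuous fun p : ℝ × ℝ => ‖γl p.1 - γl p.2‖ :=
    ((hcontl.comp continuous_fst).sub (hcontl.comp continuous_snd)).norm
  have hmS : ∀ ε, MeasurableSet (S ε) := fun ε =>
    ((measurableSet_Ioc.prod measurableSet_Ioc).inter
      ((isOpen_lt continuous_const hcont).measurableSet))
  have hmSl : ∀ ε, MeasurableSet (Sl ε) := fun ε =>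
    ((measurableSet_Ioc.prod measurableSet_Ioc).inter
      ((isOpen_lt continuous_const hcontl').measurableSet))
  -- key scaling identity of the integrals
  have key : ∀ ε : ℝ, 0 < ε →
      (∫ p in Sl ε, Fl p) = lam * ∫ p in S (ε / lam), F p := by
    intro ε hε
    have hmem : ∀ p : ℝ × ℝ, p ∈ Sl ε ↔ (lam⁻¹ • p) ∈ S (ε / lam) := by
      intro p
      have e1 : (lam⁻¹ • p).1 = p.1 / lam := by simp [div_eq_inv_mul]
      have e2 : (lam⁻¹ • p).2 = p.2 / lam := by simp [div_eq_inv_mul]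
      simp only [hS, hSl, Set.mem_setOf_eq, Set.mem_prod, Set.mem_Ioc, e1, e2, hnorm]
      constructor
      · rintro ⟨⟨⟨h1, h2⟩, h3, h4⟩, h5⟩
        refine ⟨⟨⟨div_pos h1 hlam, ?_⟩, div_pos h3 hlam, ?_⟩, ?_⟩
        · rw [div_le_iff₀ hlam]; linarith [h2]
        · rw [div_le_iff₀ hlam]; linarith [h4]
        · rw [div_lt_iff₀ hlam]
          linarith [h5]
      · rintro ⟨⟨⟨h1, h2⟩, h3, h4⟩, h5⟩
        rw [div_le_iff₀ hlam] at h2 h4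
        refine ⟨⟨⟨?_, by linarith⟩, ?_, by linarith⟩, ?_⟩
        · have := div_pos_iff.mp h1
          rcases this with ⟨h, _⟩ | ⟨_, h⟩
          · exact h
          · linarith
        · have := div_pos_iff.mp h3
          rcases this with ⟨h, _⟩ | ⟨_, h⟩
          · exact h
          · linarith
        · rw [mul_comm]
          exact (div_lt_iff₀ hlam).mp h5
    have hval : ∀ p : ℝ × ℝ, Fl p = lam⁻¹ * F (lam⁻¹ • p) := by
      intro p
      have e1 : (lam⁻¹ • p).1 = p.1 / lam := by simp [div_eq_inv_mul]
      have e2 : (lam⁻¹ • p).2 = p.2 / lam := by simp [div_eq_inv_mul]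
      simp only [hFl, hF, hderivl, hnorm, e1, e2]
      rw [mul_comm lam, ← div_div, div_eq_inv_mul]
    have hpt : ∀ p : ℝ × ℝ,
        (Sl ε).indicator Fl p = lam⁻¹ * (S (ε / lam)).indicator F (lam⁻¹ • p) := by
      intro p
      by_cases hp : p ∈ Sl ε
      · rw [Set.indicator_of_mem hp, Set.indicator_of_mem ((hmem p).mp hp), hval]
      · rw [Set.indicator_of_notMem hp,
          Set.indicator_of_notMem (fun h => hp ((hmem p).mpr h)), mul_zero]
    calc (∫ p in Sl ε, Fl p) = ∫ p, (Sl ε).indicator Fl p := (integral_indicator (hmSl ε)).symm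
      _ = ∫ p, lam⁻¹ * (S (ε / lam)).indicator F (lam⁻¹ • p) := by
          exact integral_congr_ae (Filter.Eventually.of_forall hpt)
      _ = lam⁻¹ * ∫ p, (S (ε / lam)).indicator F (lam⁻¹ • p) := integral_const_mul _ _
      _ = lam⁻¹ * (|((lam⁻¹) ^ Module.finrank ℝ (ℝ × ℝ))⁻¹| •
            ∫ p, (S (ε / lam)).indicator F p) := by
          rw [Measure.integral_comp_smul volume ((S (ε / lam)).indicator F) lam⁻¹]
      _ = lam * ∫ p in S (ε / lam), F p := by
          rw [integral_indicator (hmS _)]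
          have : Module.finrank ℝ (ℝ × ℝ) = 2 := by
            simp [Module.finrank_prod]
          rw [this]
          rw [smul_eq_mul]
          have : |((lam⁻¹) ^ 2)⁻¹| = lam ^ 2 := by
            rw [← inv_pow, inv_inv, abs_of_pos (pow_pos hlam 2)]
          rw [this, ← mul_assoc, sq, ← mul_assoc,
            inv_mul_cancel₀ hlam', one_mul]
  -- the limit function identity
  have hmap : Tendsto (fun ε : ℝ => ε / lam) (𝓝[>] 0) (𝓝[>] 0) := by
    apply tendsto_nhdsWithin_of_tendsto_nhds_of_eventually_within
    · have h0 : Tendsto (fun ε : ℝ => ε / lam) (𝓝 (0:ℝ)) (𝓝 ((0:ℝ) / lam)) :=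
        (tendsto_id : Tendsto id (𝓝 (0:ℝ)) (𝓝 0)).div_const lam
      rw [zero_div] at h0
      exact h0.mono_left nhdsWithin_le_nhds
    · filter_upwards [self_mem_nhdsWithin] with x hx
      exact div_pos hx hlam
  have hcomp : Tendsto (fun ε : ℝ =>
      lam * (μ₀ / (4 * π) * (∫ p in S (ε / lam), F p) + μ₀ * L / (2 * π) * Real.log (ε / lam))
        + μ₀ * L / (2 * π) * (lam * Real.log lam)) (𝓝[>] (0:ℝ))
      (𝓝 (lam * H + μ₀ * L / (2 * π) * (lam * Real.log lam))) :=
    ((hH.comp hmap).const_mul lam).add tendsto_const_nhds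
  have heq : ∀ᶠ ε in 𝓝[>] (0:ℝ),
      lam * (μ₀ / (4 * π) * (∫ p in S (ε / lam), F p) + μ₀ * L / (2 * π) * Real.log (ε / lam))
        + μ₀ * L / (2 * π) * (lam * Real.log lam)
      = μ₀ / (4 * π) * (∫ p in Sl ε, Fl p) + μ₀ * (lam * L) / (2 * π) * Real.log ε := by
    filter_upwards [self_mem_nhdsWithin] with ε hε
    rw [key ε hε, Real.log_div (ne_of_gt hε) hlam']
    ring
  have := hcomp.congr' heq
  exact tendsto_nhds_unique hHl this |>.symm ▸ rfl
end
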